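/- arXiv:1010.3417 — 2 statements merged into one kernel-verified Lean document; each statement's English description precedes it below -/
import Mathlib

section
/- (Lemma 2.2 iii) For any complex Finsler space and all indices r, h: 2(∂̇_h̄ Gⁱ) g_{ir̄} = C_{jr̄h̄ ᴮ|k} ηʲ ηᵏ = C_{jr̄h̄|k} ηʲ ηᵏ, i.e. 2(∂̇_h̄ Gⁱ) g_{ir̄} = C_{0r̄h̄ ᴮ|0} = C_{0r̄h̄|0}, where ᴮ| and | denote the h-covariant derivatives with respect to the Berwald and Chern–Finsler connections respectively. -/
open scoped BigOperators ComplexOrder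
open ComplexConjugate

noncomputable section

/-- Points of ℂⁿ in local coordinates. -/
abbrev Vec (n : ℕ) := Fin n → ℂ

/-- Complex-valued functions of `(z, η)` on ℂⁿ × ℂⁿ. -/
abbrev Fn (n : ℕ) := Vec n → Vec n → ℂ

/-- Wirtinger derivative `∂f/∂vᵏ` of `f` at `v`. -/
def wirt {n : ℕ} (k : Fin n) (f : Vec n → ℂ) (v : Vec n) : ℂ :=
  (1/2) * (fderiv ℝ f v (Pi.single k 1) - Complex.I * fderiv ℝ f v (Pi.single k Complex.I))

/-- Conjugate Wirtinger derivative `∂f/∂v̄ᵏ` of `f` at `v`. -/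
def wirtBar {n : ℕ} (k : Fin n) (f : Vec n → ℂ) (v : Vec n) : ℂ :=
  (1/2) * (fderiv ℝ f v (Pi.single k 1) + Complex.I * fderiv ℝ f v (Pi.single k Complex.I))

variable {n : ℕ}

/-- `∂/∂zᵏ` (Wirtinger derivative in the base variable). -/
def dz (k : Fin n) (f : Fn n) : Fn n := fun z η => wirt k (fun w => f w η) z

/-- `∂/∂z̄ᵏ`. -/
def dzBar (k : Fin n) (f : Fn n) : Fn n := fun z η => wirtBar k (fun w => f w η) z

/-- `∂̇_k = ∂/∂ηᵏ` (Wirtinger derivative in the fibre variable). -/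
def de (k : Fin n) (f : Fn n) : Fn n := fun z η => wirt k (f z) η

/-- `∂̇_k̄ = ∂/∂η̄ᵏ`. -/
def deBar (k : Fin n) (f : Fn n) : Fn n := fun z η => wirtBar k (f z) η

/-- `L = F²` viewed as a complex-valued function. -/
def Lsq (F : Vec n → Vec n → ℝ) : Fn n := fun z η => ((F z η) ^ 2 : ℂ)

/-- Fundamental metric tensor `g_{ij̄} = ∂²L/∂ηⁱ∂η̄ʲ`. -/
def gM (F : Vec n → Vec n → ℝ) (i j : Fin n) : Fn n := de i (deBar j (Lsq F))

/-- `g` as a matrix, rows = unbarred index, columns = barred index. -/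
def gmat (F : Vec n → Vec n → ℝ) (z η : Vec n) : Matrix (Fin n) (Fin n) ℂ :=
  Matrix.of fun i j => gM F i j z η

/-- Inverse metric `g^{m̄i}`, satisfying `g^{m̄i} g_{lm̄} = δˡᵢ`. -/
def gInv (F : Vec n → Vec n → ℝ) (m i : Fin n) : Fn n := fun z η => (gmat F z η)⁻¹ m i

/-- Chern–Finsler nonlinear connection `Nⁱ_j = g^{m̄i} (∂g_{lm̄}/∂zʲ) ηˡ`. -/
def CFN (F : Vec n → Vec n → ℝ) (i j : Fin n) : Fn n :=
  fun z η => ∑ m, ∑ l, gInv F m i z η * dz j (gM F l m) z η * η l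

/-- Chern–Finsler horizontal coefficients `Lⁱ_{jk} = ∂̇_j Nⁱ_k`. -/
def CFL (F : Vec n → Vec n → ℝ) (i j k : Fin n) : Fn n := de j (CFN F i k)

/-- `δ_k = ∂/∂zᵏ − Nʲ_k ∂̇_j`. -/
def CFdelta (F : Vec n → Vec n → ℝ) (k : Fin n) (f : Fn n) : Fn n :=
  fun z η => dz k f z η - ∑ j, CFN F j k z η * de j f z η

/-- Conjugate `δ_k̄ = ∂/∂z̄ᵏ − conj(Nʲ_k) ∂̇_j̄`. -/
def CFdeltaBar (F : Vec n → Vec n → ℝ) (k : Fin n) (f : Fn n) : Fn n :=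
  fun z η => dzBar k f z η - ∑ j, conj (CFN F j k z η) * deBar j f z η

/-- Cartan tensor `C_{ij̄k} = ∂̇_k g_{ij̄}`. -/
def CarT (F : Vec n → Vec n → ℝ) (i j k : Fin n) : Fn n := de k (gM F i j)

/-- Cartan tensor `C_{ij̄k̄} = ∂̇_k̄ g_{ij̄}`. -/
def CarB (F : Vec n → Vec n → ℝ) (i j k : Fin n) : Fn n := deBar k (gM F i j)

/-- Spray coefficients `Gⁱ = (1/2) Nⁱ_j ηʲ`. -/
def spray (F : Vec n → Vec n → ℝ) (i : Fin n) : Fn n :=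
  fun z η => (1/2) * ∑ j, CFN F i j z η * η j

/-- Canonical nonlinear connection `ᶜNⁱ_j = ∂̇_j Gⁱ`. -/
def cN (F : Vec n → Vec n → ℝ) (i j : Fin n) : Fn n := de j (spray F i)

/-- `ᶜδ_k = ∂/∂zᵏ − ᶜNʲ_k ∂̇_j`. -/
def cDelta (F : Vec n → Vec n → ℝ) (k : Fin n) (f : Fn n) : Fn n :=
  fun z η => dz k f z η - ∑ j, cN F j k z η * de j f z η

/-- Conjugate `ᶜδ_k̄ = ∂/∂z̄ᵏ − conj(ᶜNʲ_k) ∂̇_j̄`. -/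
def cDeltaBar (F : Vec n → Vec n → ℝ) (k : Fin n) (f : Fn n) : Fn n :=
  fun z η => dzBar k f z η - ∑ j, conj (cN F j k z η) * deBar j f z η

/-- Berwald coefficients `ᴮLⁱ_{jk} = ∂̇_k ᶜNⁱ_j`. -/
def BL (F : Vec n → Vec n → ℝ) (i j k : Fin n) : Fn n := de k (cN F i j)

/-- Mixed Berwald coefficients `ᴮLⁱ_{jk̄} = ∂̇_k̄ ᶜNⁱ_j`. -/
def BLmix (F : Vec n → Vec n → ℝ) (i j k : Fin n) : Fn n := deBar k (cN F i j)

/-- `ᴮL^m̄_{j̄k} = conj(ᴮLᵐ_{jk̄})`. -/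
def BLbar (F : Vec n → Vec n → ℝ) (m j k : Fin n) : Fn n := fun z η => conj (BLmix F m j k z η)

/-- `ᴮL^m̄_{j̄k̄} = conj(ᴮLᵐ_{jk})`. -/
def BLbarbar (F : Vec n → Vec n → ℝ) (m j k : Fin n) : Fn n := fun z η => conj (BL F m j k z η)

/-- Rund coefficients `ᶜLⁱ_{jk} = (1/2) g^{l̄i} (ᶜδ_k g_{jl̄} + ᶜδ_j g_{kl̄})`. -/
def RL (F : Vec n → Vec n → ℝ) (i j k : Fin n) : Fn n :=
  fun z η => (1/2) * ∑ l, gInv F l i z η *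
    (cDelta F k (gM F j l) z η + cDelta F j (gM F k l) z η)

/-- Mixed Rund coefficients `ᶜLⁱ_{jk̄} = (1/2) g^{l̄i} (ᶜδ_k̄ g_{jl̄} − ᶜδ_l̄ g_{jk̄})`. -/
def RLmix (F : Vec n → Vec n → ℝ) (i j k : Fin n) : Fn n :=
  fun z η => (1/2) * ∑ l, gInv F l i z η *
    (cDeltaBar F k (gM F j l) z η - cDeltaBar F l (gM F j k) z η)

/-- `ᶜL^m̄_{j̄k} = conj(ᶜLᵐ_{jk̄})`. -/
def RLbar (F : Vec n → Vec n → ℝ) (m j k : Fin n) : Fn n := fun z η => conj (RLmix F m j k z η)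

/-- Berwald horizontal covariant derivative of the metric:
`g_{ij̄ ᴮ|k} = ᶜδ_k g_{ij̄} − ᴮLˡ_{ik} g_{lj̄} − ᴮL^m̄_{j̄k} g_{im̄}`. -/
def gB (F : Vec n → Vec n → ℝ) (i j k : Fin n) : Fn n :=
  fun z η => cDelta F k (gM F i j) z η - (∑ l, BL F l i k z η * gM F l j z η)
    - ∑ m, BLbar F m j k z η * gM F i m z η

/-- Berwald horizontal covariant derivative of the Cartan tensor `C_{ij̄h ᴮ|k}`. -/
def CB (F : Vec n → Vec n → ℝ) (i j h k : Fin n) : Fn n :=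
  fun z η => cDelta F k (CarT F i j h) z η - (∑ l, BL F l i k z η * CarT F l j h z η)
    - (∑ m, BLbar F m j k z η * CarT F i m h z η)
    - ∑ l, BL F l h k z η * CarT F i j l z η

/-- Conjugate-horizontal Berwald covariant derivative of the Cartan tensor `C_{ij̄h ᴮ|k̄}`. -/
def CBbar (F : Vec n → Vec n → ℝ) (i j h k : Fin n) : Fn n :=
  fun z η => cDeltaBar F k (CarT F i j h) z η - (∑ l, BLmix F l i k z η * CarT F l j h z η)
    - (∑ m, BLbarbar F m j k z η * CarT F i m h z η)
    - ∑ l, BLmix F l h k z η * CarT F i j l z η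

/-- Berwald horizontal covariant derivative of the barred Cartan tensor `C_{ij̄h̄ ᴮ|k}`. -/
def CbB (F : Vec n → Vec n → ℝ) (i j h k : Fin n) : Fn n :=
  fun z η => cDelta F k (CarB F i j h) z η - (∑ l, BL F l i k z η * CarB F l j h z η)
    - (∑ m, BLbar F m j k z η * CarB F i m h z η)
    - ∑ m, BLbar F m h k z η * CarB F i j m z η

/-- Chern–Finsler horizontal covariant derivative of the Cartan tensor:
`C_{lr̄h|k} = δ_k C_{lr̄h} − Lⁱ_{lk} C_{ir̄h} − Lⁱ_{hk} C_{lr̄i}`. -/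
def CCf (F : Vec n → Vec n → ℝ) (l r h k : Fin n) : Fn n :=
  fun z η => CFdelta F k (CarT F l r h) z η - (∑ i, CFL F i l k z η * CarT F i r h z η)
    - ∑ i, CFL F i h k z η * CarT F l r i z η

/-- Chern–Finsler conjugate-horizontal covariant derivative of the Cartan tensor:
`C_{lr̄h|k̄} = δ_k̄ C_{lr̄h} − conj(Lᵐ_{rk}) C_{lm̄h}`. -/
def CCfBar (F : Vec n → Vec n → ℝ) (l r h k : Fin n) : Fn n :=
  fun z η => CFdeltaBar F k (CarT F l r h) z η - ∑ m, conj (CFL F m r k z η) * CarT F l m h z η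

/-- Chern–Finsler horizontal covariant derivative of the barred Cartan tensor:
`C_{lr̄h̄|k} = δ_k C_{lr̄h̄} − Lⁱ_{lk} C_{ir̄h̄}`. -/
def CbCf (F : Vec n → Vec n → ℝ) (l r h k : Fin n) : Fn n :=
  fun z η => CFdelta F k (CarB F l r h) z η - ∑ i, CFL F i l k z η * CarB F i r h z η

/-- A complex Finsler space on an open domain `D ⊆ ℂⁿ` in local coordinates. -/
structure ComplexFinslerSpace (n : ℕ) where
  D : Set (Vec n)
  isOpen_D : IsOpen D
  F : Vec n → Vec n → ℝ
  smoothL : ContDiffOn ℝ (⊤ : ℕ∞) (fun p : Vec n × Vec n => (F p.1 p.2) ^ 2)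
    (D ×ˢ {η : Vec n | η ≠ 0})
  nonneg : ∀ z ∈ D, ∀ η, 0 ≤ F z η
  eq_zero_iff : ∀ z ∈ D, ∀ η, F z η = 0 ↔ η = 0
  homogeneous : ∀ z ∈ D, ∀ η, ∀ lam : ℂ, F z (lam • η) = ‖lam‖ * F z η
  posdef : ∀ z ∈ D, ∀ η, η ≠ 0 → (gmat F z η).PosDef

end

noncomputable section
namespace L22

open Complex Filter

variable {n : ℕ}

lemma wirt_congr {k : Fin n} {f g : Vec n → ℂ} {v : Vec n} (h : f =ᶠ[nhds v] g) :
    wirt k f v = wirt k g v := by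
  unfold wirt; rw [h.fderiv_eq]

lemma wirtBar_congr {k : Fin n} {f g : Vec n → ℂ} {v : Vec n} (h : f =ᶠ[nhds v] g) :
    wirtBar k f v = wirtBar k g v := by
  unfold wirtBar; rw [h.fderiv_eq]

lemma wirtBar_mul {k : Fin n} {f g : Vec n → ℂ} {v : Vec n}
    (hf : DifferentiableAt ℝ f v) (hg : DifferentiableAt ℝ g v) :
    wirtBar k (fun x => f x * g x) v = wirtBar k f v * g v + f v * wirtBar k g v := by
  unfold wirtBar; rw [fderiv_fun_mul hf hg]; simp [smul_eq_mul]; ring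

lemma wirtBar_sum {k : Fin n} {ι : Type*} {s : Finset ι} {f : ι → Vec n → ℂ} {v : Vec n}
    (hf : ∀ i ∈ s, DifferentiableAt ℝ (f i) v) :
    wirtBar k (fun x => ∑ i ∈ s, f i x) v = ∑ i ∈ s, wirtBar k (f i) v := by
  unfold wirtBar; rw [fderiv_fun_sum hf]; simp only [ContinuousLinearMap.sum_apply, Finset.mul_sum, ← Finset.sum_add_distrib]

lemma wirtBar_const {k : Fin n} {c : ℂ} {v : Vec n} : wirtBar k (fun _ => c) v = 0 := by
  unfold wirtBar; simp

lemma wirt_const_mul {k : Fin n} {f : Vec n → ℂ} {v : Vec n} (c : ℂ)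
    (hf : DifferentiableAt ℝ f v) :
    wirt k (fun x => c * f x) v = c * wirt k f v := by
  unfold wirt; rw [fderiv_const_mul hf]; simp [smul_eq_mul]; ring

lemma wirtBar_const_mul {k : Fin n} {f : Vec n → ℂ} {v : Vec n} (c : ℂ)
    (hf : DifferentiableAt ℝ f v) :
    wirtBar k (fun x => c * f x) v = c * wirtBar k f v := by
  unfold wirtBar; rw [fderiv_const_mul hf]; simp [smul_eq_mul]; ring

lemma diffAt_coord {l : Fin n} {v : Vec n} :
    DifferentiableAt ℝ (fun x : Vec n => x l) v :=
  (ContinuousLinearMap.proj (R := ℝ) (φ := fun _ : Fin n => ℂ) l).differentiableAt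

lemma fderiv_coord_apply {l : Fin n} {v w : Vec n} :
    fderiv ℝ (fun x : Vec n => x l) v w = w l := by
  have : (fun x : Vec n => x l) = (ContinuousLinearMap.proj (R := ℝ) (φ := fun _ : Fin n => ℂ) l) := rfl
  rw [this, ContinuousLinearMap.fderiv]
  rfl

lemma wirtBar_coord {k l : Fin n} {v : Vec n} :
    wirtBar k (fun x : Vec n => x l) v = 0 := by
  unfold wirtBar
  rw [fderiv_coord_apply, fderiv_coord_apply]
  simp only [Pi.single_apply]
  split
  · simp
  · simp

end L22
end
noncomputable section
namespace L22
open Complex Filter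
variable {n : ℕ}

lemma re_im_combo (a b c : ℂ) :
    (c.re : ℂ) * a + (c.im : ℂ) * b
      = (1/2) * (a - I * b) * c + (1/2) * (a + I * b) * (starRingEnd ℂ) c := by
  have h1 : c = (c.re : ℂ) + (c.im : ℂ) * I := (Complex.re_add_im c).symm
  have h2 : (starRingEnd ℂ) c = (c.re : ℂ) - (c.im : ℂ) * I := by
    simp [Complex.ext_iff]
  have hI : I * I = -1 := Complex.I_mul_I
  linear_combination (-(1/2) * (a - I * b)) * h1 + (-(1/2) * (a + I * b)) * h2
    + ((c.im : ℂ) * b) * hI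

lemma single_decomp (k : Fin n) (c : ℂ) :
    (Pi.single k c : Vec n)
      = c.re • (Pi.single k (1:ℂ) : Vec n) + c.im • (Pi.single k (I:ℂ) : Vec n) := by
  rw [← Pi.single_smul, ← Pi.single_smul, ← Pi.single_add]
  congr 1
  rw [Complex.real_smul, Complex.real_smul, mul_one, Complex.re_add_im]

lemma fderiv_single_eq {f : Vec n → ℂ} {v : Vec n} (hf : DifferentiableAt ℝ f v)
    (k : Fin n) (c : ℂ) :
    fderiv ℝ f v (Pi.single k c)
      = wirt k f v * c + wirtBar k f v * (starRingEnd ℂ) c := by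
  rw [single_decomp k c, map_add, map_smul, map_smul]
  unfold wirt wirtBar
  rw [Complex.real_smul, Complex.real_smul]
  exact re_im_combo _ _ c

lemma fderiv_eq_wirt {f : Vec n → ℂ} {v : Vec n} (hf : DifferentiableAt ℝ f v)
    (w : Vec n) :
    fderiv ℝ f v w
      = ∑ k, (wirt k f v * w k + wirtBar k f v * (starRingEnd ℂ) (w k)) := by
  have hw : w = ∑ k, Pi.single k (w k) := by
    rw [Finset.univ_sum_single]
  nth_rewrite 1 [hw]
  rw [map_sum]
  exact Finset.sum_congr rfl fun k _ => fderiv_single_eq hf k (w k)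

lemma fderiv_smul_comp {f : Vec n → ℂ} {η : Vec n} {lam : ℂ}
    (hf : DifferentiableAt ℝ f (lam • η)) (w : Vec n) :
    fderiv ℝ (fun x => f (lam • x)) η w = fderiv ℝ f (lam • η) (lam • w) := by
  have hS : HasFDerivAt (fun x : Vec n => lam • x)
      (lam • ContinuousLinearMap.id ℝ (Vec n)) η :=
    (hasFDerivAt_id η).const_smul lam
  have h : HasFDerivAt (fun x : Vec n => f (lam • x))
      ((fderiv ℝ f (lam • η)).comp (lam • ContinuousLinearMap.id ℝ (Vec n))) η :=
    hf.hasFDerivAt.comp η hS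
  rw [h.fderiv]
  rfl

lemma wirt_smul {f : Vec n → ℂ} {η : Vec n} {lam : ℂ}
    (hf : DifferentiableAt ℝ f (lam • η)) (k : Fin n) :
    wirt k (fun x => f (lam • x)) η = lam * wirt k f (lam • η) := by
  unfold wirt
  rw [fderiv_smul_comp hf, fderiv_smul_comp hf]
  rw [show lam • (Pi.single k (1:ℂ) : Vec n) = (Pi.single k lam : Vec n) by
    rw [← Pi.single_smul, smul_eq_mul, mul_one]]
  rw [show lam • (Pi.single k (I:ℂ) : Vec n) = (Pi.single k (lam * I) : Vec n) by
    rw [← Pi.single_smul, smul_eq_mul]]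
  rw [fderiv_single_eq hf, fderiv_single_eq hf,
    fderiv_single_eq hf k (1:ℂ), fderiv_single_eq hf k (I:ℂ)]
  simp only [map_mul, Complex.conj_I, map_one]
  ring_nf
  simp only [Complex.I_sq]
  ring

lemma wirtBar_smul {f : Vec n → ℂ} {η : Vec n} {lam : ℂ}
    (hf : DifferentiableAt ℝ f (lam • η)) (k : Fin n) :
    wirtBar k (fun x => f (lam • x)) η = (starRingEnd ℂ) lam * wirtBar k f (lam • η) := by
  unfold wirtBar
  rw [fderiv_smul_comp hf, fderiv_smul_comp hf]
  rw [show lam • (Pi.single k (1:ℂ) : Vec n) = (Pi.single k lam : Vec n) by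
    rw [← Pi.single_smul, smul_eq_mul, mul_one]]
  rw [show lam • (Pi.single k (I:ℂ) : Vec n) = (Pi.single k (lam * I) : Vec n) by
    rw [← Pi.single_smul, smul_eq_mul]]
  rw [fderiv_single_eq hf, fderiv_single_eq hf,
    fderiv_single_eq hf k (1:ℂ), fderiv_single_eq hf k (I:ℂ)]
  simp only [map_mul, Complex.conj_I, map_one]
  ring_nf
  simp only [Complex.I_sq]
  ring

/-- Euler's theorem for (p,q)-homogeneous functions. -/
lemma euler {f : Vec n → ℂ} {η : Vec n} (p q : ℕ)
    (hf : DifferentiableAt ℝ f η)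
    (hom : ∀ lam : ℂ, lam ≠ 0 → f (lam • η) = lam ^ p * (starRingEnd ℂ) lam ^ q * f η) :
    (∑ k, η k * wirt k f η = (p : ℂ) * f η) ∧
    (∑ k, (starRingEnd ℂ) (η k) * wirtBar k f η = (q : ℂ) * f η) := by
  have key : ∀ c : ℂ, fderiv ℝ f η (c • η)
      = ((p : ℂ) * c + (q : ℂ) * (starRingEnd ℂ) c) * f η := by
    intro c
    set lam : ℝ → ℂ := fun t => 1 + (t : ℂ) * c with hlam
    have hlamD : HasDerivAt lam c 0 := by
      have h0 : HasDerivAt (fun t : ℝ => (t : ℂ)) 1 0 := by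
        simpa using (hasDerivAt_id (0:ℝ)).ofReal_comp
      simpa [hlam] using (h0.mul_const c).const_add 1
    have hlam0 : lam 0 = 1 := by simp [hlam]
    have hcurve : ∀ t : ℝ, lam t • η = η + t • (c • η) := by
      intro t
      rw [hlam]
      show (1 + (t : ℂ) * c) • η = _
      rw [add_smul, one_smul, ← Complex.real_smul, smul_assoc]
    have hfun : (fun t : ℝ => lam t • η) = fun t : ℝ => η + t • (c • η) :=
      funext hcurve
    have hγ : HasDerivAt (fun t : ℝ => lam t • η) (c • η) 0 := by
      rw [hfun]
      simpa using ((hasDerivAt_id (0:ℝ)).smul_const (c • η)).const_add η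
    have hf' : HasFDerivAt f (fderiv ℝ f η) ((fun t : ℝ => lam t • η) 0) := by
      rw [show (fun t : ℝ => lam t • η) 0 = η by simp only [hlam0, one_smul]]
      exact hf.hasFDerivAt
    have hcomp : HasDerivAt (fun t => f (lam t • η)) (fderiv ℝ f η (c • η)) 0 := by
      have := hf'.comp_hasDerivAt 0 hγ
      simpa [Function.comp_def] using this
    have hpsi : HasDerivAt
        (fun t : ℝ => lam t ^ p * (1 + (t:ℂ) * (starRingEnd ℂ) c) ^ q * f η)
        (((p : ℂ) * c + (q : ℂ) * (starRingEnd ℂ) c) * f η) 0 := by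
      have hmu : HasDerivAt (fun t : ℝ => 1 + (t : ℂ) * (starRingEnd ℂ) c)
          ((starRingEnd ℂ) c) 0 := by
        have h0 : HasDerivAt (fun t : ℝ => (t : ℂ)) 1 0 := by
          simpa using (hasDerivAt_id (0:ℝ)).ofReal_comp
        simpa using (h0.mul_const ((starRingEnd ℂ) c)).const_add 1
      have h1 : HasDerivAt (fun t : ℝ => lam t ^ p) ((p : ℂ) * c) 0 := by
        have hg := hasDerivAt_pow p ((1:ℂ))
        have := hg.scomp_of_eq 0 hlamD (by rw [hlam0])
        simp only [Function.comp_def] at this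
        simpa [smul_eq_mul, mul_comm, mul_assoc] using this
      have h2 : HasDerivAt (fun t : ℝ => (1 + (t:ℂ) * (starRingEnd ℂ) c) ^ q)
          ((q : ℂ) * (starRingEnd ℂ) c) 0 := by
        have hg := hasDerivAt_pow q ((1:ℂ))
        have := hg.scomp_of_eq 0 hmu (by simp)
        simp only [Function.comp_def] at this
        simpa [smul_eq_mul, mul_comm, mul_assoc] using this
      have h3 := (h1.mul h2).mul_const (f η)
      have e0 : lam (0:ℝ) ^ p = 1 := by rw [hlam0]; simp
      have e1 : (1 + ((0:ℝ):ℂ) * (starRingEnd ℂ) c) ^ q = 1 := by simp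
      rw [e0, e1] at h3
      simpa [add_mul, mul_comm, mul_assoc, mul_left_comm] using h3
    have heq : (fun t => f (lam t • η)) =ᶠ[nhds (0:ℝ)]
        (fun t : ℝ => lam t ^ p * (1 + (t:ℂ) * (starRingEnd ℂ) c) ^ q * f η) := by
      have hcont : ContinuousAt lam 0 := hlamD.continuousAt
      have hne : ∀ᶠ t in nhds (0:ℝ), lam t ≠ 0 := by
        have hmem : {w : ℂ | w ≠ 0} ∈ nhds (lam 0) := by
          rw [hlam0]; exact isOpen_ne.mem_nhds one_ne_zero
        exact hcont hmem
      filter_upwards [hne] with t ht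
      rw [hom (lam t) ht]
      congr 2
      show (starRingEnd ℂ) (1 + (t:ℂ) * c) ^ q = _
      rw [map_add, map_mul, Complex.conj_ofReal, map_one]
    have := hcomp.congr_of_eventuallyEq heq.symm
    exact this.unique hpsi
  have dec : ∀ c : ℂ, fderiv ℝ f η (c • η)
      = c * (∑ k, η k * wirt k f η)
        + (starRingEnd ℂ) c * (∑ k, (starRingEnd ℂ) (η k) * wirtBar k f η) := by
    intro c
    rw [fderiv_eq_wirt hf]
    rw [Finset.mul_sum, Finset.mul_sum, ← Finset.sum_add_distrib]
    refine Finset.sum_congr rfl fun k _ => ?_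
    simp only [Pi.smul_apply, smul_eq_mul, map_mul]
    ring
  have e1 := key 1
  have e2 := key I
  rw [dec 1] at e1
  rw [dec I] at e2
  simp only [map_one, Complex.conj_I] at e1 e2
  set A := ∑ k, η k * wirt k f η with hA
  set B := ∑ k, (starRingEnd ℂ) (η k) * wirtBar k f η with hB
  have hIA : A - B = ((p : ℂ) - q) * f η := by
    apply mul_left_cancel₀ Complex.I_ne_zero
    linear_combination e2
  have hAB : A + B = ((p : ℂ) + q) * f η := by
    linear_combination e1
  constructor
  · linear_combination (hAB + hIA) / 2
  · linear_combination (hAB - hIA) / 2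

end L22
end
noncomputable section
namespace L22
open Complex Filter Topology
variable {n : ℕ}

/-- Uncurried version of an `Fn`. -/
def unc (f : Fn n) : Vec n × Vec n → ℂ := fun p => f p.1 p.2

/-- The domain. -/
def USet (S : ComplexFinslerSpace n) : Set (Vec n × Vec n) := S.D ×ˢ {η : Vec n | η ≠ 0}

lemma isOpen_USet (S : ComplexFinslerSpace n) : IsOpen (USet S) :=
  S.isOpen_D.prod isOpen_compl_singleton

lemma mem_USet {S : ComplexFinslerSpace n} {z η : Vec n} (hz : z ∈ S.D) (hη : η ≠ 0) :
    (z, η) ∈ USet S := ⟨hz, hη⟩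

/-- Smoothness on the domain. -/
def Sm (S : ComplexFinslerSpace n) (f : Fn n) : Prop :=
  ∀ p ∈ USet S, ContDiffAt ℝ (⊤ : ℕ∞) (unc f) p

-- slice lemmas
lemma hasFDerivAt_slice_eta {f : Fn n} {z η : Vec n}
    (hf : DifferentiableAt ℝ (unc f) (z, η)) :
    HasFDerivAt (f z) ((fderiv ℝ (unc f) (z, η)).comp
      ((0 : Vec n →L[ℝ] Vec n).prod (ContinuousLinearMap.id ℝ (Vec n)))) η := by
  have hincl : HasFDerivAt (fun η' : Vec n => (z, η'))
      ((0 : Vec n →L[ℝ] Vec n).prod (ContinuousLinearMap.id ℝ (Vec n))) η :=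
    (hasFDerivAt_const z η).prodMk (hasFDerivAt_id η)
  exact hf.hasFDerivAt.comp η hincl

lemma diffAt_slice_eta {f : Fn n} {z η : Vec n}
    (hf : DifferentiableAt ℝ (unc f) (z, η)) :
    DifferentiableAt ℝ (f z) η := (hasFDerivAt_slice_eta hf).differentiableAt

lemma fderiv_slice_eta {f : Fn n} {z η : Vec n}
    (hf : DifferentiableAt ℝ (unc f) (z, η)) (v : Vec n) :
    fderiv ℝ (f z) η v = fderiv ℝ (unc f) (z, η) (0, v) := by
  rw [(hasFDerivAt_slice_eta hf).fderiv]; rfl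

lemma hasFDerivAt_slice_z {f : Fn n} {z η : Vec n}
    (hf : DifferentiableAt ℝ (unc f) (z, η)) :
    HasFDerivAt (fun w => f w η) ((fderiv ℝ (unc f) (z, η)).comp
      ((ContinuousLinearMap.id ℝ (Vec n)).prod (0 : Vec n →L[ℝ] Vec n))) z := by
  have hincl : HasFDerivAt (fun w : Vec n => (w, η))
      ((ContinuousLinearMap.id ℝ (Vec n)).prod (0 : Vec n →L[ℝ] Vec n)) z :=
    (hasFDerivAt_id z).prodMk (hasFDerivAt_const η z)
  exact hf.hasFDerivAt.comp z hincl

lemma diffAt_slice_z {f : Fn n} {z η : Vec n}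
    (hf : DifferentiableAt ℝ (unc f) (z, η)) :
    DifferentiableAt ℝ (fun w => f w η) z := (hasFDerivAt_slice_z hf).differentiableAt

lemma fderiv_slice_z {f : Fn n} {z η : Vec n}
    (hf : DifferentiableAt ℝ (unc f) (z, η)) (v : Vec n) :
    fderiv ℝ (fun w => f w η) z v = fderiv ℝ (unc f) (z, η) (v, 0) := by
  rw [(hasFDerivAt_slice_z hf).fderiv]; rfl

lemma Sm.diffAt_eta {S : ComplexFinslerSpace n} {f : Fn n} (hf : Sm S f)
    {z η : Vec n} (hz : z ∈ S.D) (hη : η ≠ 0) :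
    DifferentiableAt ℝ (f z) η :=
  diffAt_slice_eta ((hf _ (mem_USet hz hη)).differentiableAt (by simp))

lemma Sm.diffAt_z {S : ComplexFinslerSpace n} {f : Fn n} (hf : Sm S f)
    {z η : Vec n} (hz : z ∈ S.D) (hη : η ≠ 0) :
    DifferentiableAt ℝ (fun w => f w η) z :=
  diffAt_slice_z ((hf _ (mem_USet hz hη)).differentiableAt (by simp))

/-- A generic "pair Wirtinger operator". -/
def pop (a b : Vec n × Vec n) (ε : ℂ) (g : Vec n × Vec n → ℂ) : Vec n × Vec n → ℂ :=
  fun p => (1/2) * (fderiv ℝ g p a + ε * fderiv ℝ g p b)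

lemma pop_congr {a b : Vec n × Vec n} {ε : ℂ} {g₁ g₂ : Vec n × Vec n → ℂ}
    {p : Vec n × Vec n} (h : g₁ =ᶠ[𝓝 p] g₂) : pop a b ε g₁ p = pop a b ε g₂ p := by
  unfold pop; rw [h.fderiv_eq]

-- expressing the four operators via `pop` on `USet`
lemma de_eq_pop {S : ComplexFinslerSpace n} {f : Fn n} (hf : Sm S f) (k : Fin n)
    {z η : Vec n} (hz : z ∈ S.D) (hη : η ≠ 0) :
    de k f z η = pop (0, Pi.single k 1) (0, Pi.single k I) (-I) (unc f) (z, η) := by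
  have hd := (hf _ (mem_USet hz hη)).differentiableAt (by simp)
  show wirt k (f z) η = _
  unfold wirt pop
  rw [fderiv_slice_eta hd, fderiv_slice_eta hd]
  ring

lemma deBar_eq_pop {S : ComplexFinslerSpace n} {f : Fn n} (hf : Sm S f) (k : Fin n)
    {z η : Vec n} (hz : z ∈ S.D) (hη : η ≠ 0) :
    deBar k f z η = pop (0, Pi.single k 1) (0, Pi.single k I) I (unc f) (z, η) := by
  have hd := (hf _ (mem_USet hz hη)).differentiableAt (by simp)
  show wirtBar k (f z) η = _
  unfold wirtBar pop
  rw [fderiv_slice_eta hd, fderiv_slice_eta hd]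

lemma dz_eq_pop {S : ComplexFinslerSpace n} {f : Fn n} (hf : Sm S f) (k : Fin n)
    {z η : Vec n} (hz : z ∈ S.D) (hη : η ≠ 0) :
    dz k f z η = pop (Pi.single k 1, 0) (Pi.single k I, 0) (-I) (unc f) (z, η) := by
  have hd := (hf _ (mem_USet hz hη)).differentiableAt (by simp)
  show wirt k (fun w => f w η) z = _
  unfold wirt pop
  rw [fderiv_slice_z hd, fderiv_slice_z hd]
  ring

lemma unc_de_eventuallyEq {S : ComplexFinslerSpace n} {f : Fn n} (hf : Sm S f) (k : Fin n)
    {p : Vec n × Vec n} (hp : p ∈ USet S) :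
    unc (de k f) =ᶠ[𝓝 p] pop (0, Pi.single k 1) (0, Pi.single k I) (-I) (unc f) := by
  filter_upwards [(isOpen_USet S).mem_nhds hp] with q hq
  exact de_eq_pop hf k hq.1 hq.2

lemma unc_deBar_eventuallyEq {S : ComplexFinslerSpace n} {f : Fn n} (hf : Sm S f) (k : Fin n)
    {p : Vec n × Vec n} (hp : p ∈ USet S) :
    unc (deBar k f) =ᶠ[𝓝 p] pop (0, Pi.single k 1) (0, Pi.single k I) I (unc f) := by
  filter_upwards [(isOpen_USet S).mem_nhds hp] with q hq
  exact deBar_eq_pop hf k hq.1 hq.2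

lemma unc_dz_eventuallyEq {S : ComplexFinslerSpace n} {f : Fn n} (hf : Sm S f) (k : Fin n)
    {p : Vec n × Vec n} (hp : p ∈ USet S) :
    unc (dz k f) =ᶠ[𝓝 p] pop (Pi.single k 1, 0) (Pi.single k I, 0) (-I) (unc f) := by
  filter_upwards [(isOpen_USet S).mem_nhds hp] with q hq
  exact dz_eq_pop hf k hq.1 hq.2

lemma contDiffAt_fderiv_apply {g : Vec n × Vec n → ℂ} {p : Vec n × Vec n}
    (hg : ContDiffAt ℝ (⊤ : ℕ∞) g p) (u : Vec n × Vec n) :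
    ContDiffAt ℝ (⊤ : ℕ∞) (fun q => fderiv ℝ g q u) p := by
  have h1 : ContDiffAt ℝ (⊤ : ℕ∞) (fderiv ℝ g) p := hg.fderiv_right (by simp)
  exact h1.clm_apply contDiffAt_const

lemma pop_contDiffAt {a b : Vec n × Vec n} {ε : ℂ} {g : Vec n × Vec n → ℂ}
    {p : Vec n × Vec n} (hg : ContDiffAt ℝ (⊤ : ℕ∞) g p) :
    ContDiffAt ℝ (⊤ : ℕ∞) (pop a b ε g) p := by
  unfold pop
  exact (contDiffAt_const.mul ((contDiffAt_fderiv_apply hg a).add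
    (contDiffAt_const.mul (contDiffAt_fderiv_apply hg b))))

lemma Sm.de {S : ComplexFinslerSpace n} {f : Fn n} (hf : Sm S f) (k : Fin n) :
    Sm S (de k f) := by
  intro p hp
  exact (pop_contDiffAt (hf p hp)).congr_of_eventuallyEq (unc_de_eventuallyEq hf k hp)

lemma Sm.deBar {S : ComplexFinslerSpace n} {f : Fn n} (hf : Sm S f) (k : Fin n) :
    Sm S (deBar k f) := by
  intro p hp
  exact (pop_contDiffAt (hf p hp)).congr_of_eventuallyEq (unc_deBar_eventuallyEq hf k hp)

lemma Sm.dz {S : ComplexFinslerSpace n} {f : Fn n} (hf : Sm S f) (k : Fin n) :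
    Sm S (dz k f) := by
  intro p hp
  exact (pop_contDiffAt (hf p hp)).congr_of_eventuallyEq (unc_dz_eventuallyEq hf k hp)

-- symmetry of second derivatives
lemma pair_symm {g : Vec n × Vec n → ℂ} {p : Vec n × Vec n}
    (hg : ContDiffAt ℝ (⊤ : ℕ∞) g p) (u v : Vec n × Vec n) :
    fderiv ℝ (fun q => fderiv ℝ g q v) p u = fderiv ℝ (fun q => fderiv ℝ g q u) p v := by
  have hsymm : IsSymmSndFDerivAt ℝ g p := hg.isSymmSndFDerivAt (by
    exact (by rw [minSmoothness_of_isRCLikeNormedField]; exact WithTop.coe_le_coe.mpr le_top))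
  have hd : DifferentiableAt ℝ (fderiv ℝ g) p :=
    (hg.fderiv_right (m := 1) (WithTop.coe_le_coe.mpr le_top)).differentiableAt (by simp)
  have h1 : fderiv ℝ (fun q => fderiv ℝ g q v) p
      = (fderiv ℝ (fderiv ℝ g) p).flip v + (fderiv ℝ g p).comp (0 : (Vec n × Vec n) →L[ℝ] (Vec n × Vec n)) := by
    have := fderiv_clm_apply (c := fderiv ℝ g) (u := fun _ => v) hd
      (differentiableAt_const v)
    rw [this]
    simp only [fderiv_fun_const, fderiv_const, Pi.zero_apply]
    abel
  have h2 : fderiv ℝ (fun q => fderiv ℝ g q u) p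
      = (fderiv ℝ (fderiv ℝ g) p).flip u + (fderiv ℝ g p).comp (0 : (Vec n × Vec n) →L[ℝ] (Vec n × Vec n)) := by
    have := fderiv_clm_apply (c := fderiv ℝ g) (u := fun _ => u) hd
      (differentiableAt_const u)
    rw [this]
    simp only [fderiv_fun_const, fderiv_const, Pi.zero_apply]
    abel
  rw [h1, h2]
  simp only [ContinuousLinearMap.add_apply, ContinuousLinearMap.flip_apply,
    ContinuousLinearMap.comp_apply, ContinuousLinearMap.coe_comp',
    ContinuousLinearMap.zero_apply, map_zero]
  exact congrArg₂ (· + ·) (hsymm.eq u v) rfl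

lemma pop_comm {a b a' b' : Vec n × Vec n} {ε ε' : ℂ} {g : Vec n × Vec n → ℂ}
    {p : Vec n × Vec n} (hg : ContDiffAt ℝ (⊤ : ℕ∞) g p) :
    pop a b ε (pop a' b' ε' g) p = pop a' b' ε' (pop a b ε g) p := by
  have hda : ∀ u : Vec n × Vec n, DifferentiableAt ℝ (fun q => fderiv ℝ g q u) p :=
    fun u => (contDiffAt_fderiv_apply hg u).differentiableAt (by simp)
  have key : ∀ u u' : Vec n × Vec n, fderiv ℝ (pop a' b' ε' g) p u
      = (1/2) * (fderiv ℝ (fun q => fderiv ℝ g q a') p u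
        + ε' * fderiv ℝ (fun q => fderiv ℝ g q b') p u) := by
    intro u _
    unfold pop
    rw [fderiv_const_mul ((hda a').fun_add ((hda b').const_mul ε'))]
    rw [fderiv_fun_add (hda a') ((hda b').const_mul ε')]
    rw [fderiv_const_mul (hda b')]
    simp only [ContinuousLinearMap.smul_apply, ContinuousLinearMap.add_apply, smul_eq_mul]
  have key2 : ∀ u u' : Vec n × Vec n, fderiv ℝ (pop a b ε g) p u
      = (1/2) * (fderiv ℝ (fun q => fderiv ℝ g q a) p u
        + ε * fderiv ℝ (fun q => fderiv ℝ g q b) p u) := by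
    intro u _
    unfold pop
    rw [fderiv_const_mul ((hda a).fun_add ((hda b).const_mul ε))]
    rw [fderiv_fun_add (hda a) ((hda b).const_mul ε)]
    rw [fderiv_const_mul (hda b)]
    simp only [ContinuousLinearMap.smul_apply, ContinuousLinearMap.add_apply, smul_eq_mul]
  show (1/2) * (fderiv ℝ (pop a' b' ε' g) p a + ε * fderiv ℝ (pop a' b' ε' g) p b)
      = (1/2) * (fderiv ℝ (pop a b ε g) p a' + ε' * fderiv ℝ (pop a b ε g) p b')
  rw [key a a, key b b, key2 a' a', key2 b' b']
  rw [pair_symm hg a a', pair_symm hg a b', pair_symm hg b a', pair_symm hg b b']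
  ring

end L22
end
noncomputable section
namespace L22
open Complex Filter Topology
variable {n : ℕ} {S : ComplexFinslerSpace n}

-- commutation corollaries
lemma de_deBar_comm {f : Fn n} (hf : Sm S f) (m h : Fin n)
    {z η : Vec n} (hz : z ∈ S.D) (hη : η ≠ 0) :
    de m (deBar h f) z η = deBar h (de m f) z η := by
  have hp : (z, η) ∈ USet S := mem_USet hz hη
  rw [de_eq_pop (hf.deBar h) m hz hη,
    pop_congr (unc_deBar_eventuallyEq hf h hp),
    pop_comm (hf _ hp),
    ← pop_congr (unc_de_eventuallyEq hf m hp),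
    ← deBar_eq_pop (hf.de m) h hz hη]

lemma de_de_comm {f : Fn n} (hf : Sm S f) (m j : Fin n)
    {z η : Vec n} (hz : z ∈ S.D) (hη : η ≠ 0) :
    de m (de j f) z η = de j (de m f) z η := by
  have hp : (z, η) ∈ USet S := mem_USet hz hη
  rw [de_eq_pop (hf.de j) m hz hη,
    pop_congr (unc_de_eventuallyEq hf j hp),
    pop_comm (hf _ hp),
    ← pop_congr (unc_de_eventuallyEq hf m hp),
    ← de_eq_pop (hf.de m) j hz hη]

lemma deBar_dz_comm {f : Fn n} (hf : Sm S f) (h k : Fin n)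
    {z η : Vec n} (hz : z ∈ S.D) (hη : η ≠ 0) :
    deBar h (dz k f) z η = dz k (deBar h f) z η := by
  have hp : (z, η) ∈ USet S := mem_USet hz hη
  rw [deBar_eq_pop (hf.dz k) h hz hη,
    pop_congr (unc_dz_eventuallyEq hf k hp),
    pop_comm (hf _ hp),
    ← pop_congr (unc_deBar_eventuallyEq hf h hp),
    ← dz_eq_pop (hf.deBar h) k hz hη]

-- closure properties of Sm
lemma Sm.mul {a b : Fn n} (ha : Sm S a) (hb : Sm S b) :
    Sm S (fun z η => a z η * b z η) := fun p hp => (ha p hp).mul (hb p hp)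

lemma Sm.add {a b : Fn n} (ha : Sm S a) (hb : Sm S b) :
    Sm S (fun z η => a z η + b z η) := fun p hp => (ha p hp).add (hb p hp)

lemma Sm.sum {ι : Type*} {s : Finset ι} {a : ι → Fn n} (ha : ∀ i ∈ s, Sm S (a i)) :
    Sm S (fun z η => ∑ i ∈ s, a i z η) := fun p hp => by
  have : ContDiffAt ℝ (⊤ : ℕ∞) (fun q => ∑ i ∈ s, unc (a i) q) p :=
    ContDiffAt.sum fun i hi => ha i hi p hp
  exact this

lemma Sm.const_mul {a : Fn n} (ha : Sm S a) (c : ℂ) :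
    Sm S (fun z η => c * a z η) := fun p hp => contDiffAt_const.mul (ha p hp)

lemma Sm.coordEta (l : Fin n) : Sm S (fun _ η => η l) := fun p _ => by
  have : ContDiffAt ℝ (⊤ : ℕ∞) (fun q : Vec n × Vec n =>
      (ContinuousLinearMap.proj (R := ℝ) (φ := fun _ : Fin n => ℂ) l) q.2) p :=
    ((ContinuousLinearMap.proj (R := ℝ) (φ := fun _ : Fin n => ℂ) l).contDiff.comp
      contDiff_snd).contDiffAt
  exact this

/-- `(p,q)`-homogeneity in the fibre. -/
def Hom (S : ComplexFinslerSpace n) (p q : ℕ) (f : Fn n) : Prop :=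
  ∀ z ∈ S.D, ∀ η : Vec n, η ≠ 0 → ∀ lam : ℂ, lam ≠ 0 →
    f z (lam • η) = lam ^ p * (starRingEnd ℂ) lam ^ q * f z η

lemma Hom.de {f : Fn n} {p q : ℕ} (hf : Sm S f) (hh : Hom S (p + 1) q f) (k : Fin n) :
    Hom S p q (de k f) := by
  intro z hz η hη lam hlam
  have hη' : lam • η ≠ 0 := smul_ne_zero hlam hη
  have hd : DifferentiableAt ℝ (f z) (lam • η) := hf.diffAt_eta hz hη'
  have h1 : wirt k (fun x => f z (lam • x)) η = lam * wirt k (f z) (lam • η) :=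
    wirt_smul hd k
  have h2 : wirt k (fun x => f z (lam • x)) η
      = lam ^ (p+1) * (starRingEnd ℂ) lam ^ q * wirt k (f z) η := by
    have hev : (fun x => f z (lam • x)) =ᶠ[𝓝 η]
        (fun x => lam ^ (p+1) * (starRingEnd ℂ) lam ^ q * f z x) := by
      filter_upwards [isOpen_compl_singleton.mem_nhds hη] with x hx
      exact hh z hz x hx lam hlam
    rw [wirt_congr hev]
    exact wirt_const_mul _ (hf.diffAt_eta hz hη)
  show wirt k (f z) (lam • η) = lam ^ p * (starRingEnd ℂ) lam ^ q * wirt k (f z) η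
  apply mul_left_cancel₀ hlam
  rw [← h1, h2, pow_succ]
  ring

lemma Hom.deBar {f : Fn n} {p q : ℕ} (hf : Sm S f) (hh : Hom S p (q + 1) f) (k : Fin n) :
    Hom S p q (deBar k f) := by
  intro z hz η hη lam hlam
  have hη' : lam • η ≠ 0 := smul_ne_zero hlam hη
  have hd : DifferentiableAt ℝ (f z) (lam • η) := hf.diffAt_eta hz hη'
  have h1 : wirtBar k (fun x => f z (lam • x)) η
      = (starRingEnd ℂ) lam * wirtBar k (f z) (lam • η) := wirtBar_smul hd k
  have h2 : wirtBar k (fun x => f z (lam • x)) η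
      = lam ^ p * (starRingEnd ℂ) lam ^ (q+1) * wirtBar k (f z) η := by
    have hev : (fun x => f z (lam • x)) =ᶠ[𝓝 η]
        (fun x => lam ^ p * (starRingEnd ℂ) lam ^ (q+1) * f z x) := by
      filter_upwards [isOpen_compl_singleton.mem_nhds hη] with x hx
      exact hh z hz x hx lam hlam
    rw [wirtBar_congr hev]
    exact wirtBar_const_mul _ (hf.diffAt_eta hz hη)
  have hc : (starRingEnd ℂ) lam ≠ 0 := by
    simpa using hlam
  show wirtBar k (f z) (lam • η) = lam ^ p * (starRingEnd ℂ) lam ^ q * wirtBar k (f z) η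
  apply mul_left_cancel₀ hc
  rw [← h1, h2, pow_succ]
  ring

lemma Hom.dz {f : Fn n} {p q : ℕ} (hf : Sm S f) (hh : Hom S p q f) (k : Fin n) :
    Hom S p q (dz k f) := by
  intro z hz η hη lam hlam
  have hev : (fun w => f w (lam • η)) =ᶠ[𝓝 z]
      (fun w => lam ^ p * (starRingEnd ℂ) lam ^ q * f w η) := by
    filter_upwards [S.isOpen_D.mem_nhds hz] with w hw
    exact hh w hw η hη lam hlam
  show wirt k (fun w => f w (lam • η)) z = _
  rw [wirt_congr hev]
  exact wirt_const_mul _ (hf.diffAt_z hz hη)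

lemma Hom.mul {a b : Fn n} {p₁ q₁ p₂ q₂ : ℕ} (ha : Hom S p₁ q₁ a) (hb : Hom S p₂ q₂ b) :
    Hom S (p₁ + p₂) (q₁ + q₂) (fun z η => a z η * b z η) := by
  intro z hz η hη lam hlam
  show a z (lam • η) * b z (lam • η) = _
  rw [ha z hz η hη lam hlam, hb z hz η hη lam hlam, pow_add, pow_add]
  ring

lemma Hom.sum {ι : Type*} {s : Finset ι} {a : ι → Fn n} {p q : ℕ}
    (ha : ∀ i ∈ s, Hom S p q (a i)) :
    Hom S p q (fun z η => ∑ i ∈ s, a i z η) := by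
  intro z hz η hη lam hlam
  show (∑ i ∈ s, a i z (lam • η)) = _
  rw [Finset.mul_sum]
  exact Finset.sum_congr rfl fun i hi => ha i hi z hz η hη lam hlam

lemma Hom.const_mul {a : Fn n} {p q : ℕ} (ha : Hom S p q a) (c : ℂ) :
    Hom S p q (fun z η => c * a z η) := by
  intro z hz η hη lam hlam
  show c * a z (lam • η) = _
  rw [ha z hz η hη lam hlam]
  ring

lemma Hom.coordEta (l : Fin n) : Hom S 1 0 (fun _ η => η l) := by
  intro z hz η hη lam hlam
  show (lam • η) l = _
  simp [smul_eq_mul]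

/-- Euler's theorem, `Fn` version. -/
lemma Hom.euler_de {f : Fn n} {p q : ℕ} (hf : Sm S f) (hh : Hom S p q f)
    {z η : Vec n} (hz : z ∈ S.D) (hη : η ≠ 0) :
    ∑ k, η k * _root_.de k f z η = (p : ℂ) * f z η :=
  (euler p q (hf.diffAt_eta hz hη) (fun lam hlam => hh z hz η hη lam hlam)).1

lemma Hom.euler_deBar {f : Fn n} {p q : ℕ} (hf : Sm S f) (hh : Hom S p q f)
    {z η : Vec n} (hz : z ∈ S.D) (hη : η ≠ 0) :
    ∑ k, (starRingEnd ℂ) (η k) * _root_.deBar k f z η = (q : ℂ) * f z η :=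
  (euler p q (hf.diffAt_eta hz hη) (fun lam hlam => hh z hz η hη lam hlam)).2

end L22
end
noncomputable section
namespace L22
open Complex Filter Topology
variable {n : ℕ} (S : ComplexFinslerSpace n)

lemma Sm_Lsq : Sm S (Lsq S.F) := by
  intro p hp
  have h0 : ContDiffAt ℝ (⊤ : ℕ∞) (fun q : Vec n × Vec n => (S.F q.1 q.2) ^ 2) p :=
    S.smoothL.contDiffAt ((isOpen_USet S).mem_nhds hp)
  have h2 : ContDiffAt ℝ (⊤ : ℕ∞) (fun q : Vec n × Vec n =>
      Complex.ofRealCLM ((S.F q.1 q.2) ^ 2)) p :=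
    (Complex.ofRealCLM.contDiff (n := ((⊤ : ℕ∞) : WithTop ℕ∞))).contDiffAt.comp p h0
  have heq : unc (Lsq S.F) = fun q : Vec n × Vec n =>
      Complex.ofRealCLM ((S.F q.1 q.2) ^ 2) := by
    funext q
    show ((S.F q.1 q.2 : ℂ)) ^ 2 = _
    rw [Complex.ofRealCLM_apply]
    push_cast
    ring
  rw [heq]
  exact h2

lemma Hom_Lsq : Hom S 1 1 (Lsq S.F) := by
  intro z hz η hη lam hlam
  show ((S.F z (lam • η) : ℂ)) ^ 2 = _
  rw [S.homogeneous z hz η lam]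
  have habs : ((‖lam‖ : ℝ) : ℂ) ^ 2 = lam * (starRingEnd ℂ) lam := by
    rw [← Complex.ofReal_pow, Complex.sq_norm, Complex.mul_conj]
  push_cast
  rw [mul_pow, habs]
  show _ = lam ^ 1 * (starRingEnd ℂ) lam ^ 1 * ((S.F z η : ℂ)) ^ 2
  ring

lemma Sm_gM (i j : Fin n) : Sm S (gM S.F i j) := ((Sm_Lsq S).deBar j).de i

lemma Hom_gM (i j : Fin n) : Hom S 0 0 (gM S.F i j) :=
  Hom.de ((Sm_Lsq S).deBar j) (Hom.deBar (Sm_Lsq S) (Hom_Lsq S) j) i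

lemma contDiffAt_det {p : Vec n × Vec n} {M : Vec n × Vec n → Matrix (Fin n) (Fin n) ℂ}
    (h : ∀ a b, ContDiffAt ℝ (⊤ : ℕ∞) (fun q => M q a b) p) :
    ContDiffAt ℝ (⊤ : ℕ∞) (fun q => (M q).det) p := by
  have hdet : (fun q => (M q).det) = fun q =>
      ∑ σ : Equiv.Perm (Fin n), ((Equiv.Perm.sign σ : ℤ) : ℂ) * ∏ i, M q (σ i) i := by
    funext q
    rw [Matrix.det_apply]
    exact Finset.sum_congr rfl fun σ _ => by
      rw [Units.smul_def, zsmul_eq_mul]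
  rw [hdet]
  apply ContDiffAt.sum
  intro σ _
  exact contDiffAt_const.mul (contDiffAt_prod fun a _ => h (σ a) a)

lemma contDiffAt_adjugate {p : Vec n × Vec n} {M : Vec n × Vec n → Matrix (Fin n) (Fin n) ℂ}
    (h : ∀ a b, ContDiffAt ℝ (⊤ : ℕ∞) (fun q => M q a b) p) (i j : Fin n) :
    ContDiffAt ℝ (⊤ : ℕ∞) (fun q => (M q).adjugate i j) p := by
  have hadj : (fun q => (M q).adjugate i j)
      = fun q => ((M q).updateRow j (Pi.single i 1)).det := by
    funext q
    rw [Matrix.adjugate_apply]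
  rw [hadj]
  apply contDiffAt_det
  intro a b
  rcases eq_or_ne a j with rfl | hne
  · have : (fun q => ((M q).updateRow a (Pi.single i 1)) a b)
        = fun _ => (Pi.single i 1 : Fin n → ℂ) b := by
      funext q
      rw [Matrix.updateRow_self]
    rw [this]
    exact contDiffAt_const
  · have : (fun q => ((M q).updateRow j (Pi.single i 1)) a b) = fun q => M q a b := by
      funext q
      rw [Matrix.updateRow_ne hne]
    rw [this]
    exact h a b

lemma unc_gInv_eq (m i : Fin n) : unc (gInv S.F m i)
    = fun q : Vec n × Vec n => ((gmat S.F q.1 q.2).det)⁻¹ * (gmat S.F q.1 q.2).adjugate m i := by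
  funext q
  show (gmat S.F q.1 q.2)⁻¹ m i = _
  rw [Matrix.inv_def, Matrix.smul_apply, Ring.inverse_eq_inv', smul_eq_mul]

lemma Sm_gInv (m i : Fin n) : Sm S (gInv S.F m i) := by
  intro p hp
  have hent : ∀ a b, ContDiffAt ℝ (⊤ : ℕ∞) (fun q : Vec n × Vec n => gmat S.F q.1 q.2 a b) p :=
    fun a b => Sm_gM S a b p hp
  have hne : (gmat S.F p.1 p.2).det ≠ 0 := (S.posdef p.1 hp.1 p.2 hp.2).det_pos.ne'
  rw [unc_gInv_eq]
  exact ((contDiffAt_det hent).inv hne).mul (contDiffAt_adjugate hent m i)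

lemma Hom_gInv (m i : Fin n) : Hom S 0 0 (gInv S.F m i) := by
  intro z hz η hη lam hlam
  have hmat : gmat S.F z (lam • η) = gmat S.F z η := by
    ext a b
    have := Hom_gM S a b z hz η hη lam hlam
    simpa [gmat] using this
  show (gmat S.F z (lam • η))⁻¹ m i = _
  rw [hmat]
  simp
  rfl

lemma gInv_mul_gM {z η : Vec n} (hz : z ∈ S.D) (hη : η ≠ 0) (m r : Fin n) :
    ∑ i, gInv S.F m i z η * gM S.F i r z η = if m = r then 1 else 0 := by
  have hu : IsUnit (gmat S.F z η).det := (S.posdef z hz η hη).det_pos.ne'.isUnit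
  have h := Matrix.nonsing_inv_mul (gmat S.F z η) hu
  have h2 := congrFun (congrFun h m) r
  rw [Matrix.mul_apply] at h2
  rw [show (1 : Matrix (Fin n) (Fin n) ℂ) m r = if m = r then 1 else 0 from Matrix.one_apply]
    at h2
  exact h2

lemma Sm_CFN (i j : Fin n) : Sm S (CFN S.F i j) := by
  apply Sm.sum
  intro m _
  apply Sm.sum
  intro l _
  exact ((Sm_gInv S m i).mul ((Sm_gM S l m).dz j)).mul (Sm.coordEta l)

lemma Hom_CFN (i j : Fin n) : Hom S 1 0 (CFN S.F i j) := by
  apply Hom.sum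
  intro m _
  apply Hom.sum
  intro l _
  exact ((Hom_gInv S m i).mul (Hom.dz (Sm_gM S l m) (Hom_gM S l m) j)).mul (Hom.coordEta l)

lemma Sm_spray (i : Fin n) : Sm S (spray S.F i) :=
  Sm.const_mul (Sm.sum fun j _ => (Sm_CFN S i j).mul (Sm.coordEta j)) (1/2)

lemma Hom_spray (i : Fin n) : Hom S 2 0 (spray S.F i) :=
  Hom.const_mul (Hom.sum fun j _ => (Hom_CFN S i j).mul (Hom.coordEta j)) (1/2)

lemma Sm_cN (i j : Fin n) : Sm S (cN S.F i j) := (Sm_spray S i).de j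

lemma Hom_cN (i j : Fin n) : Hom S 1 0 (cN S.F i j) :=
  Hom.de (Sm_spray S i) (Hom_spray S i) j

end L22
end
noncomputable section
namespace L22
open Complex Filter Topology
variable {n : ℕ} (S : ComplexFinslerSpace n) {z η : Vec n}

lemma sum3_perm (f : Fin n → Fin n → Fin n → ℂ) :
    ∑ j, ∑ k, ∑ l, f j k l = ∑ l, ∑ j, ∑ k, f j k l := by
  calc ∑ j, ∑ k, ∑ l, f j k l
      = ∑ j, ∑ l, ∑ k, f j k l := Finset.sum_congr rfl fun j _ => Finset.sum_comm
    _ = ∑ l, ∑ j, ∑ k, f j k l := Finset.sum_comm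

lemma sum4_perm (f : Fin n → Fin n → Fin n → Fin n → ℂ) :
    ∑ i, ∑ k, ∑ m, ∑ l, f i k m l = ∑ l, ∑ k, ∑ m, ∑ i, f i k m l := by
  calc ∑ i, ∑ k, ∑ m, ∑ l, f i k m l
      = ∑ k, ∑ m, ∑ l, ∑ i, f i k m l := by
        rw [Finset.sum_comm]
        refine Finset.sum_congr rfl fun k _ => ?_
        rw [Finset.sum_comm]
        exact Finset.sum_congr rfl fun m _ => Finset.sum_comm
    _ = ∑ k, ∑ l, ∑ m, ∑ i, f i k m l := Finset.sum_congr rfl fun k _ => Finset.sum_comm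
    _ = ∑ l, ∑ k, ∑ m, ∑ i, f i k m l := Finset.sum_comm

lemma sum_cN_eta (hz : z ∈ S.D) (hη : η ≠ 0) (m : Fin n) :
    ∑ k, cN S.F m k z η * η k = 2 * spray S.F m z η := by
  have h := Hom.euler_de (Sm_spray S m) (Hom_spray S m) hz hη
  calc ∑ k, cN S.F m k z η * η k
      = ∑ k, η k * de k (spray S.F m) z η :=
        Finset.sum_congr rfl fun k _ => mul_comm _ _
    _ = ((2 : ℕ) : ℂ) * spray S.F m z η := h
    _ = 2 * spray S.F m z η := by norm_num

lemma sum_CFN_eta (m : Fin n) :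
    ∑ k, CFN S.F m k z η * η k = 2 * spray S.F m z η := by
  show _ = 2 * ((1/2) * ∑ j, CFN S.F m j z η * η j)
  ring

lemma BL_contract (hz : z ∈ S.D) (hη : η ≠ 0) (l : Fin n) :
    ∑ j, ∑ k, BL S.F l j k z η * η j * η k = 2 * spray S.F l z η := by
  have hin : ∀ j, ∑ k, η k * de k (cN S.F l j) z η = cN S.F l j z η := by
    intro j
    have h := Hom.euler_de (Sm_cN S l j) (Hom_cN S l j) hz hη
    rw [h]
    norm_num
  calc ∑ j, ∑ k, BL S.F l j k z η * η j * η k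
      = ∑ j, (∑ k, η k * de k (cN S.F l j) z η) * η j := by
        refine Finset.sum_congr rfl fun j _ => ?_
        rw [Finset.sum_mul]
        refine Finset.sum_congr rfl fun k _ => ?_
        show de k (cN S.F l j) z η * η j * η k = _
        ring
    _ = ∑ j, cN S.F l j z η * η j := by
        refine Finset.sum_congr rfl fun j _ => by rw [hin j]
    _ = 2 * spray S.F l z η := sum_cN_eta S hz hη l

lemma CFL_contract (hz : z ∈ S.D) (hη : η ≠ 0) (i : Fin n) :
    ∑ j, ∑ k, CFL S.F i j k z η * η j * η k = 2 * spray S.F i z η := by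
  have hin : ∀ k, ∑ j, η j * de j (CFN S.F i k) z η = CFN S.F i k z η := by
    intro k
    have h := Hom.euler_de (Sm_CFN S i k) (Hom_CFN S i k) hz hη
    rw [h]
    norm_num
  calc ∑ j, ∑ k, CFL S.F i j k z η * η j * η k
      = ∑ k, ∑ j, CFL S.F i j k z η * η j * η k := Finset.sum_comm
    _ = ∑ k, (∑ j, η j * de j (CFN S.F i k) z η) * η k := by
        refine Finset.sum_congr rfl fun k _ => ?_
        rw [Finset.sum_mul]
        refine Finset.sum_congr rfl fun j _ => ?_
        show de j (CFN S.F i k) z η * η j * η k = _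
        ring
    _ = ∑ k, CFN S.F i k z η * η k := by
        refine Finset.sum_congr rfl fun k _ => by rw [hin k]
    _ = 2 * spray S.F i z η := sum_CFN_eta S i

lemma BLbar_contract (hz : z ∈ S.D) (hη : η ≠ 0) (m j : Fin n) :
    ∑ k, BLbar S.F m j k z η * η k = 0 := by
  have h := Hom.euler_deBar (Sm_cN S m j) (Hom_cN S m j) hz hη
  have h0 : ∑ k, (starRingEnd ℂ) (η k) * deBar k (cN S.F m j) z η = 0 := by
    rw [h]
    norm_num
  calc ∑ k, BLbar S.F m j k z η * η k
      = (starRingEnd ℂ) (∑ k, (starRingEnd ℂ) (η k) * deBar k (cN S.F m j) z η) := by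
        rw [map_sum]
        refine Finset.sum_congr rfl fun k _ => ?_
        show (starRingEnd ℂ) (deBar k (cN S.F m j) z η) * η k = _
        rw [map_mul, Complex.conj_conj]
        ring
    _ = 0 := by rw [h0, map_zero]

lemma cDelta_contract (hz : z ∈ S.D) (hη : η ≠ 0) (g : Fn n) :
    ∑ k, cDelta S.F k g z η * η k
      = ∑ k, dz k g z η * η k - 2 * ∑ m, spray S.F m z η * de m g z η := by
  have h1 : ∑ k, cDelta S.F k g z η * η k
      = ∑ k, dz k g z η * η k - ∑ m, (∑ k, cN S.F m k z η * η k) * de m g z η := by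
    calc ∑ k, cDelta S.F k g z η * η k
        = ∑ k, (dz k g z η * η k - ∑ m, cN S.F m k z η * η k * de m g z η) := by
          refine Finset.sum_congr rfl fun k _ => ?_
          show (dz k g z η - ∑ m, cN S.F m k z η * de m g z η) * η k = _
          rw [sub_mul, Finset.sum_mul]
          congr 1
          exact Finset.sum_congr rfl fun m _ => by ring
      _ = ∑ k, dz k g z η * η k - ∑ k, ∑ m, cN S.F m k z η * η k * de m g z η :=
          Finset.sum_sub_distrib _ _
      _ = ∑ k, dz k g z η * η k - ∑ m, (∑ k, cN S.F m k z η * η k) * de m g z η := by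
          rw [Finset.sum_comm]
          congr 1
          exact Finset.sum_congr rfl fun m _ => (Finset.sum_mul _ _ _).symm
  rw [h1]
  congr 1
  rw [Finset.mul_sum]
  refine Finset.sum_congr rfl fun m _ => ?_
  rw [sum_cN_eta S hz hη m]
  ring

lemma CFdelta_contract (hz : z ∈ S.D) (hη : η ≠ 0) (g : Fn n) :
    ∑ k, CFdelta S.F k g z η * η k
      = ∑ k, dz k g z η * η k - 2 * ∑ m, spray S.F m z η * de m g z η := by
  have h1 : ∑ k, CFdelta S.F k g z η * η k
      = ∑ k, dz k g z η * η k - ∑ m, (∑ k, CFN S.F m k z η * η k) * de m g z η := by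
    calc ∑ k, CFdelta S.F k g z η * η k
        = ∑ k, (dz k g z η * η k - ∑ m, CFN S.F m k z η * η k * de m g z η) := by
          refine Finset.sum_congr rfl fun k _ => ?_
          show (dz k g z η - ∑ m, CFN S.F m k z η * de m g z η) * η k = _
          rw [sub_mul, Finset.sum_mul]
          congr 1
          exact Finset.sum_congr rfl fun m _ => by ring
      _ = ∑ k, dz k g z η * η k - ∑ k, ∑ m, CFN S.F m k z η * η k * de m g z η :=
          Finset.sum_sub_distrib _ _
      _ = ∑ k, dz k g z η * η k - ∑ m, (∑ k, CFN S.F m k z η * η k) * de m g z η := by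
          rw [Finset.sum_comm]
          congr 1
          exact Finset.sum_congr rfl fun m _ => (Finset.sum_mul _ _ _).symm
  rw [h1]
  congr 1
  rw [Finset.mul_sum]
  refine Finset.sum_congr rfl fun m _ => ?_
  rw [sum_CFN_eta S m]
  ring

end L22
end
noncomputable section
namespace L22
open Complex Filter Topology
variable {n : ℕ} (S : ComplexFinslerSpace n) {z η : Vec n}

lemma CbB_contract (hz : z ∈ S.D) (hη : η ≠ 0) (r h : Fin n) :
    ∑ j, ∑ k, CbB S.F j r h k z η * η j * η k
      = (∑ j, ∑ k, dz k (CarB S.F j r h) z η * η j * η k)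
        - 2 * ∑ m, spray S.F m z η * (∑ j, de m (CarB S.F j r h) z η * η j)
        - 2 * ∑ l, spray S.F l z η * CarB S.F l r h z η := by
  have hsplit : ∑ j, ∑ k, CbB S.F j r h k z η * η j * η k
      = (∑ j, ∑ k, cDelta S.F k (CarB S.F j r h) z η * η j * η k)
        - (∑ j, ∑ k, (∑ l, BL S.F l j k z η * CarB S.F l r h z η) * η j * η k)
        - (∑ j, ∑ k, (∑ m, BLbar S.F m r k z η * CarB S.F j m h z η) * η j * η k)
        - (∑ j, ∑ k, (∑ m, BLbar S.F m h k z η * CarB S.F j r m z η) * η j * η k) := by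
    rw [← Finset.sum_sub_distrib, ← Finset.sum_sub_distrib, ← Finset.sum_sub_distrib]
    refine Finset.sum_congr rfl fun j _ => ?_
    rw [← Finset.sum_sub_distrib, ← Finset.sum_sub_distrib, ← Finset.sum_sub_distrib]
    refine Finset.sum_congr rfl fun k _ => ?_
    show (cDelta S.F k (CarB S.F j r h) z η
        - (∑ l, BL S.F l j k z η * CarB S.F l r h z η)
        - (∑ m, BLbar S.F m r k z η * CarB S.F j m h z η)
        - (∑ m, BLbar S.F m h k z η * CarB S.F j r m z η)) * η j * η k = _
    ring
  have hT1 : ∑ j, ∑ k, cDelta S.F k (CarB S.F j r h) z η * η j * η k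
      = (∑ j, ∑ k, dz k (CarB S.F j r h) z η * η j * η k)
        - 2 * ∑ m, spray S.F m z η * (∑ j, de m (CarB S.F j r h) z η * η j) := by
    calc ∑ j, ∑ k, cDelta S.F k (CarB S.F j r h) z η * η j * η k
        = ∑ j, (∑ k, cDelta S.F k (CarB S.F j r h) z η * η k) * η j := by
          refine Finset.sum_congr rfl fun j _ => ?_
          rw [Finset.sum_mul]
          exact Finset.sum_congr rfl fun k _ => by ring
      _ = ∑ j, ((∑ k, dz k (CarB S.F j r h) z η * η k
            - 2 * ∑ m, spray S.F m z η * de m (CarB S.F j r h) z η) * η j) := by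
          refine Finset.sum_congr rfl fun j _ => ?_
          rw [cDelta_contract S hz hη]
      _ = (∑ j, (∑ k, dz k (CarB S.F j r h) z η * η k) * η j)
            - ∑ j, (2 * ∑ m, spray S.F m z η * de m (CarB S.F j r h) z η) * η j := by
          rw [← Finset.sum_sub_distrib]
          exact Finset.sum_congr rfl fun j _ => by ring
      _ = (∑ j, ∑ k, dz k (CarB S.F j r h) z η * η j * η k)
            - 2 * ∑ m, spray S.F m z η * (∑ j, de m (CarB S.F j r h) z η * η j) := by
          congr 1
          · refine Finset.sum_congr rfl fun j _ => ?_
            rw [Finset.sum_mul]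
            exact Finset.sum_congr rfl fun k _ => by ring
          · calc ∑ j, (2 * ∑ m, spray S.F m z η * de m (CarB S.F j r h) z η) * η j
                = ∑ j, ∑ m, 2 * (spray S.F m z η * de m (CarB S.F j r h) z η) * η j := by
                  refine Finset.sum_congr rfl fun j _ => ?_
                  rw [Finset.mul_sum, Finset.sum_mul]
              _ = ∑ m, ∑ j, 2 * (spray S.F m z η * de m (CarB S.F j r h) z η) * η j :=
                  Finset.sum_comm
              _ = 2 * ∑ m, spray S.F m z η * (∑ j, de m (CarB S.F j r h) z η * η j) := by
                  rw [Finset.mul_sum]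
                  refine Finset.sum_congr rfl fun m _ => ?_
                  rw [Finset.mul_sum, Finset.mul_sum]
                  exact Finset.sum_congr rfl fun j _ => by ring
  have hT2 : ∑ j, ∑ k, (∑ l, BL S.F l j k z η * CarB S.F l r h z η) * η j * η k
      = 2 * ∑ l, spray S.F l z η * CarB S.F l r h z η := by
    calc ∑ j, ∑ k, (∑ l, BL S.F l j k z η * CarB S.F l r h z η) * η j * η k
        = ∑ j, ∑ k, ∑ l, BL S.F l j k z η * η j * η k * CarB S.F l r h z η := by
          refine Finset.sum_congr rfl fun j _ => Finset.sum_congr rfl fun k _ => ?_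
          rw [Finset.sum_mul, Finset.sum_mul]
          exact Finset.sum_congr rfl fun l _ => by ring
      _ = ∑ l, ∑ j, ∑ k, BL S.F l j k z η * η j * η k * CarB S.F l r h z η :=
          sum3_perm _
      _ = ∑ l, (∑ j, ∑ k, BL S.F l j k z η * η j * η k) * CarB S.F l r h z η := by
          refine Finset.sum_congr rfl fun l _ => ?_
          rw [Finset.sum_mul]
          refine Finset.sum_congr rfl fun j _ => ?_
          rw [Finset.sum_mul]
      _ = ∑ l, 2 * spray S.F l z η * CarB S.F l r h z η := by
          refine Finset.sum_congr rfl fun l _ => ?_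
          rw [BL_contract S hz hη l]
      _ = 2 * ∑ l, spray S.F l z η * CarB S.F l r h z η := by
          rw [Finset.mul_sum]
          exact Finset.sum_congr rfl fun l _ => by ring
  have hT3 : ∑ j, ∑ k, (∑ m, BLbar S.F m r k z η * CarB S.F j m h z η) * η j * η k = 0 := by
    refine Finset.sum_eq_zero fun j _ => ?_
    calc ∑ k, (∑ m, BLbar S.F m r k z η * CarB S.F j m h z η) * η j * η k
        = ∑ k, ∑ m, BLbar S.F m r k z η * CarB S.F j m h z η * η j * η k := by
          refine Finset.sum_congr rfl fun k _ => ?_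
          rw [Finset.sum_mul, Finset.sum_mul]
      _ = ∑ m, ∑ k, BLbar S.F m r k z η * CarB S.F j m h z η * η j * η k :=
          Finset.sum_comm
      _ = ∑ m, (∑ k, BLbar S.F m r k z η * η k) * (CarB S.F j m h z η * η j) := by
          refine Finset.sum_congr rfl fun m _ => ?_
          rw [Finset.sum_mul]
          exact Finset.sum_congr rfl fun k _ => by ring
      _ = 0 := by
          refine Finset.sum_eq_zero fun m _ => ?_
          rw [BLbar_contract S hz hη m r, zero_mul]
  have hT4 : ∑ j, ∑ k, (∑ m, BLbar S.F m h k z η * CarB S.F j r m z η) * η j * η k = 0 := by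
    refine Finset.sum_eq_zero fun j _ => ?_
    calc ∑ k, (∑ m, BLbar S.F m h k z η * CarB S.F j r m z η) * η j * η k
        = ∑ k, ∑ m, BLbar S.F m h k z η * CarB S.F j r m z η * η j * η k := by
          refine Finset.sum_congr rfl fun k _ => ?_
          rw [Finset.sum_mul, Finset.sum_mul]
      _ = ∑ m, ∑ k, BLbar S.F m h k z η * CarB S.F j r m z η * η j * η k :=
          Finset.sum_comm
      _ = ∑ m, (∑ k, BLbar S.F m h k z η * η k) * (CarB S.F j r m z η * η j) := by
          refine Finset.sum_congr rfl fun m _ => ?_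
          rw [Finset.sum_mul]
          exact Finset.sum_congr rfl fun k _ => by ring
      _ = 0 := by
          refine Finset.sum_eq_zero fun m _ => ?_
          rw [BLbar_contract S hz hη m h, zero_mul]
  rw [hsplit, hT1, hT2, hT3, hT4]
  ring

lemma CbCf_contract (hz : z ∈ S.D) (hη : η ≠ 0) (r h : Fin n) :
    ∑ j, ∑ k, CbCf S.F j r h k z η * η j * η k
      = (∑ j, ∑ k, dz k (CarB S.F j r h) z η * η j * η k)
        - 2 * ∑ m, spray S.F m z η * (∑ j, de m (CarB S.F j r h) z η * η j)
        - 2 * ∑ l, spray S.F l z η * CarB S.F l r h z η := by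
  have hsplit : ∑ j, ∑ k, CbCf S.F j r h k z η * η j * η k
      = (∑ j, ∑ k, CFdelta S.F k (CarB S.F j r h) z η * η j * η k)
        - (∑ j, ∑ k, (∑ i, CFL S.F i j k z η * CarB S.F i r h z η) * η j * η k) := by
    rw [← Finset.sum_sub_distrib]
    refine Finset.sum_congr rfl fun j _ => ?_
    rw [← Finset.sum_sub_distrib]
    refine Finset.sum_congr rfl fun k _ => ?_
    show (CFdelta S.F k (CarB S.F j r h) z η
        - (∑ i, CFL S.F i j k z η * CarB S.F i r h z η)) * η j * η k = _
    ring
  have hT1 : ∑ j, ∑ k, CFdelta S.F k (CarB S.F j r h) z η * η j * η k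
      = (∑ j, ∑ k, dz k (CarB S.F j r h) z η * η j * η k)
        - 2 * ∑ m, spray S.F m z η * (∑ j, de m (CarB S.F j r h) z η * η j) := by
    calc ∑ j, ∑ k, CFdelta S.F k (CarB S.F j r h) z η * η j * η k
        = ∑ j, (∑ k, CFdelta S.F k (CarB S.F j r h) z η * η k) * η j := by
          refine Finset.sum_congr rfl fun j _ => ?_
          rw [Finset.sum_mul]
          exact Finset.sum_congr rfl fun k _ => by ring
      _ = ∑ j, ((∑ k, dz k (CarB S.F j r h) z η * η k
            - 2 * ∑ m, spray S.F m z η * de m (CarB S.F j r h) z η) * η j) := by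
          refine Finset.sum_congr rfl fun j _ => ?_
          rw [CFdelta_contract S hz hη]
      _ = (∑ j, (∑ k, dz k (CarB S.F j r h) z η * η k) * η j)
            - ∑ j, (2 * ∑ m, spray S.F m z η * de m (CarB S.F j r h) z η) * η j := by
          rw [← Finset.sum_sub_distrib]
          exact Finset.sum_congr rfl fun j _ => by ring
      _ = (∑ j, ∑ k, dz k (CarB S.F j r h) z η * η j * η k)
            - 2 * ∑ m, spray S.F m z η * (∑ j, de m (CarB S.F j r h) z η * η j) := by
          congr 1
          · refine Finset.sum_congr rfl fun j _ => ?_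
            rw [Finset.sum_mul]
            exact Finset.sum_congr rfl fun k _ => by ring
          · calc ∑ j, (2 * ∑ m, spray S.F m z η * de m (CarB S.F j r h) z η) * η j
                = ∑ j, ∑ m, 2 * (spray S.F m z η * de m (CarB S.F j r h) z η) * η j := by
                  refine Finset.sum_congr rfl fun j _ => ?_
                  rw [Finset.mul_sum, Finset.sum_mul]
              _ = ∑ m, ∑ j, 2 * (spray S.F m z η * de m (CarB S.F j r h) z η) * η j :=
                  Finset.sum_comm
              _ = 2 * ∑ m, spray S.F m z η * (∑ j, de m (CarB S.F j r h) z η * η j) := by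
                  rw [Finset.mul_sum]
                  refine Finset.sum_congr rfl fun m _ => ?_
                  rw [Finset.mul_sum, Finset.mul_sum]
                  exact Finset.sum_congr rfl fun j _ => by ring
  have hT2 : ∑ j, ∑ k, (∑ i, CFL S.F i j k z η * CarB S.F i r h z η) * η j * η k
      = 2 * ∑ l, spray S.F l z η * CarB S.F l r h z η := by
    calc ∑ j, ∑ k, (∑ i, CFL S.F i j k z η * CarB S.F i r h z η) * η j * η k
        = ∑ j, ∑ k, ∑ i, CFL S.F i j k z η * η j * η k * CarB S.F i r h z η := by
          refine Finset.sum_congr rfl fun j _ => Finset.sum_congr rfl fun k _ => ?_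
          rw [Finset.sum_mul, Finset.sum_mul]
          exact Finset.sum_congr rfl fun i _ => by ring
      _ = ∑ i, ∑ j, ∑ k, CFL S.F i j k z η * η j * η k * CarB S.F i r h z η :=
          sum3_perm _
      _ = ∑ i, (∑ j, ∑ k, CFL S.F i j k z η * η j * η k) * CarB S.F i r h z η := by
          refine Finset.sum_congr rfl fun i _ => ?_
          rw [Finset.sum_mul]
          refine Finset.sum_congr rfl fun j _ => ?_
          rw [Finset.sum_mul]
      _ = ∑ i, 2 * spray S.F i z η * CarB S.F i r h z η := by
          refine Finset.sum_congr rfl fun i _ => ?_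
          rw [CFL_contract S hz hη i]
      _ = 2 * ∑ l, spray S.F l z η * CarB S.F l r h z η := by
          rw [Finset.mul_sum]
          exact Finset.sum_congr rfl fun l _ => by ring
  rw [hsplit, hT1, hT2]

end L22
end
noncomputable section
namespace L22
open Complex Filter Topology
variable {n : ℕ} (S : ComplexFinslerSpace n) {z η : Vec n}

lemma middle_zero (hz : z ∈ S.D) (hη : η ≠ 0) (r h m : Fin n) :
    ∑ j, de m (CarB S.F j r h) z η * η j = 0 := by
  have hcomm : ∀ j : Fin n, de m (CarB S.F j r h) z η
      = deBar h (de m (gM S.F j r)) z η := fun j =>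
    de_deBar_comm (Sm_gM S j r) m h hz hη
  have hPhi : ∀ η' : Vec n, η' ≠ 0 → ∑ j, η' j * de m (gM S.F j r) z η' = 0 := by
    intro η' hη'
    have hswap : ∀ j : Fin n, de m (gM S.F j r) z η' = de j (gM S.F m r) z η' := fun j =>
      de_de_comm ((Sm_Lsq S).deBar r) m j hz hη'
    calc ∑ j, η' j * de m (gM S.F j r) z η'
        = ∑ j, η' j * de j (gM S.F m r) z η' :=
          Finset.sum_congr rfl fun j _ => by rw [hswap j]
      _ = ((0 : ℕ) : ℂ) * gM S.F m r z η' :=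
          Hom.euler_de (Sm_gM S m r) (Hom_gM S m r) hz hη'
      _ = 0 := by norm_num
  have h1 : wirtBar h (fun η' => ∑ j, η' j * de m (gM S.F j r) z η') η
      = ∑ j, η j * deBar h (de m (gM S.F j r)) z η := by
    rw [wirtBar_sum (fun j _ =>
      (diffAt_coord).fun_mul (((Sm_gM S j r).de m).diffAt_eta hz hη))]
    refine Finset.sum_congr rfl fun j _ => ?_
    rw [wirtBar_mul (diffAt_coord) (((Sm_gM S j r).de m).diffAt_eta hz hη)]
    rw [wirtBar_coord]
    show 0 * de m (gM S.F j r) z η + η j * deBar h (de m (gM S.F j r)) z η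
        = η j * deBar h (de m (gM S.F j r)) z η
    ring
  have h2 : wirtBar h (fun η' => ∑ j, η' j * de m (gM S.F j r) z η') η = 0 := by
    have hev : (fun η' => ∑ j, η' j * de m (gM S.F j r) z η') =ᶠ[𝓝 η]
        (fun _ => (0 : ℂ)) := by
      filter_upwards [isOpen_compl_singleton.mem_nhds hη] with η' hη'
      exact hPhi η' hη'
    rw [wirtBar_congr hev]
    exact wirtBar_const
  have h3 : ∑ j, η j * deBar h (de m (gM S.F j r)) z η = 0 := by rw [← h1, h2]
  calc ∑ j, de m (CarB S.F j r h) z η * η j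
      = ∑ j, η j * deBar h (de m (gM S.F j r)) z η :=
        Finset.sum_congr rfl fun j _ => by rw [hcomm j]; ring
    _ = 0 := h3

lemma final_identity (hz : z ∈ S.D) (hη : η ≠ 0) (r h : Fin n) :
    2 * ∑ i, deBar h (spray S.F i) z η * gM S.F i r z η
      = (∑ j, ∑ k, dz k (CarB S.F j r h) z η * η j * η k)
        - 2 * ∑ l, spray S.F l z η * CarB S.F l r h z η := by
  -- the function Φ and Φ'
  have key : ∀ η' : Vec n, η' ≠ 0 →
      2 * ∑ i, spray S.F i z η' * gM S.F i r z η'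
        = ∑ l, ∑ k, dz k (gM S.F l r) z η' * η' l * η' k := by
    intro η' hη'
    have e1 : 2 * ∑ i, spray S.F i z η' * gM S.F i r z η'
        = ∑ i, (∑ k, CFN S.F i k z η' * η' k) * gM S.F i r z η' := by
      rw [Finset.mul_sum]
      refine Finset.sum_congr rfl fun i _ => ?_
      show 2 * ((1/2 : ℂ) * (∑ k, CFN S.F i k z η' * η' k) * gM S.F i r z η') = _
      ring
    have e2 : ∑ i, (∑ k, CFN S.F i k z η' * η' k) * gM S.F i r z η'
        = ∑ i, ∑ k, ∑ m, ∑ l, gInv S.F m i z η' * dz k (gM S.F l m) z η'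
            * η' l * η' k * gM S.F i r z η' := by
      refine Finset.sum_congr rfl fun i _ => ?_
      rw [Finset.sum_mul]
      refine Finset.sum_congr rfl fun k _ => ?_
      show (∑ m, ∑ l, gInv S.F m i z η' * dz k (gM S.F l m) z η' * η' l) * η' k
          * gM S.F i r z η' = _
      rw [Finset.sum_mul, Finset.sum_mul]
      refine Finset.sum_congr rfl fun m _ => ?_
      rw [Finset.sum_mul, Finset.sum_mul]
    have e3 : ∑ i, ∑ k, ∑ m, ∑ l, gInv S.F m i z η' * dz k (gM S.F l m) z η'
          * η' l * η' k * gM S.F i r z η'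
        = ∑ l, ∑ k, ∑ m, ∑ i, gInv S.F m i z η' * dz k (gM S.F l m) z η'
          * η' l * η' k * gM S.F i r z η' := sum4_perm _
    have e4 : ∑ l, ∑ k, ∑ m, ∑ i, gInv S.F m i z η' * dz k (gM S.F l m) z η'
          * η' l * η' k * gM S.F i r z η'
        = ∑ l, ∑ k, dz k (gM S.F l r) z η' * η' l * η' k := by
      refine Finset.sum_congr rfl fun l _ => Finset.sum_congr rfl fun k _ => ?_
      calc ∑ m, ∑ i, gInv S.F m i z η' * dz k (gM S.F l m) z η'
            * η' l * η' k * gM S.F i r z η'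
          = ∑ m, (∑ i, gInv S.F m i z η' * gM S.F i r z η')
              * (dz k (gM S.F l m) z η' * η' l * η' k) := by
            refine Finset.sum_congr rfl fun m _ => ?_
            rw [Finset.sum_mul]
            exact Finset.sum_congr rfl fun i _ => by ring
        _ = ∑ m, (if m = r then (1:ℂ) else 0) * (dz k (gM S.F l m) z η' * η' l * η' k) := by
            refine Finset.sum_congr rfl fun m _ => ?_
            rw [gInv_mul_gM S hz hη' m r]
        _ = ∑ m, (if m = r then dz k (gM S.F l m) z η' * η' l * η' k else 0) := by
            refine Finset.sum_congr rfl fun m _ => ?_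
            split <;> simp
        _ = dz k (gM S.F l r) z η' * η' l * η' k := by
            rw [Finset.sum_ite_eq' Finset.univ r
              (fun m => dz k (gM S.F l m) z η' * η' l * η' k)]
            simp
    rw [e1, e2, e3, e4]
  -- derivative of Φ
  have hA : wirtBar h (fun η' => 2 * ∑ i, spray S.F i z η' * gM S.F i r z η') η
      = 2 * ∑ i, (deBar h (spray S.F i) z η * gM S.F i r z η
        + spray S.F i z η * CarB S.F i r h z η) := by
    have hd : ∀ i : Fin n, DifferentiableAt ℝ
        (fun η' => spray S.F i z η' * gM S.F i r z η') η :=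
      fun i => ((Sm_spray S i).diffAt_eta hz hη).mul ((Sm_gM S i r).diffAt_eta hz hη)
    rw [wirtBar_const_mul 2 (DifferentiableAt.fun_sum fun i _ => hd i)]
    congr 1
    rw [wirtBar_sum fun i _ => hd i]
    refine Finset.sum_congr rfl fun i _ => ?_
    rw [wirtBar_mul ((Sm_spray S i).diffAt_eta hz hη) ((Sm_gM S i r).diffAt_eta hz hη)]
    rfl
  -- derivative of Φ'
  have hB : wirtBar h (fun η' => ∑ l, ∑ k, dz k (gM S.F l r) z η' * η' l * η' k) η
      = ∑ l, ∑ k, dz k (CarB S.F l r h) z η * η l * η k := by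
    have hdlk : ∀ l k : Fin n, DifferentiableAt ℝ
        (fun η' => dz k (gM S.F l r) z η' * η' l * η' k) η :=
      fun l k => ((((Sm_gM S l r).dz k).diffAt_eta hz hη).mul diffAt_coord).mul diffAt_coord
    have hdl : ∀ l : Fin n, DifferentiableAt ℝ
        (fun η' => ∑ k, dz k (gM S.F l r) z η' * η' l * η' k) η :=
      fun l => DifferentiableAt.fun_sum fun k _ => hdlk l k
    rw [wirtBar_sum fun l _ => hdl l]
    refine Finset.sum_congr rfl fun l _ => ?_
    rw [wirtBar_sum fun k _ => hdlk l k]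
    refine Finset.sum_congr rfl fun k _ => ?_
    rw [wirtBar_mul ((((Sm_gM S l r).dz k).diffAt_eta hz hη).fun_mul diffAt_coord)
      diffAt_coord]
    rw [wirtBar_mul (((Sm_gM S l r).dz k).diffAt_eta hz hη) diffAt_coord]
    rw [wirtBar_coord, wirtBar_coord]
    have hc : wirtBar h (dz k (gM S.F l r) z) η = dz k (CarB S.F l r h) z η :=
      deBar_dz_comm (Sm_gM S l r) h k hz hη
    rw [hc]
    ring
  -- Φ = Φ' near η
  have hev : (fun η' => 2 * ∑ i, spray S.F i z η' * gM S.F i r z η') =ᶠ[𝓝 η]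
      (fun η' => ∑ l, ∑ k, dz k (gM S.F l r) z η' * η' l * η' k) := by
    filter_upwards [isOpen_compl_singleton.mem_nhds hη] with η' hη'
    exact key η' hη'
  have hAB : 2 * ∑ i, (deBar h (spray S.F i) z η * gM S.F i r z η
        + spray S.F i z η * CarB S.F i r h z η)
      = ∑ l, ∑ k, dz k (CarB S.F l r h) z η * η l * η k := by
    rw [← hA, ← hB]
    exact wirtBar_congr hev
  have hexp : 2 * ∑ i, (deBar h (spray S.F i) z η * gM S.F i r z η
        + spray S.F i z η * CarB S.F i r h z η)
      = 2 * ∑ i, deBar h (spray S.F i) z η * gM S.F i r z η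
        + 2 * ∑ l, spray S.F l z η * CarB S.F l r h z η := by
    rw [Finset.sum_add_distrib]
    ring
  have hfin := hexp.symm.trans hAB
  linear_combination hfin

end L22
end
/-- Lemma 2.2 (iii): `2(∂̇_h̄ Gⁱ) g_{ir̄} = C_{0r̄h̄ ᴮ|0} = C_{0r̄h̄|0}`. -/
theorem statement3 {n : ℕ} (S : ComplexFinslerSpace n) :
    ∀ r h : Fin n, ∀ z ∈ S.D, ∀ η : Vec n, η ≠ 0 →
      (2 * ∑ i, deBar h (spray S.F i) z η * gM S.F i r z η
          = ∑ j, ∑ k, CbB S.F j r h k z η * η j * η k) ∧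
      (∑ j, ∑ k, CbB S.F j r h k z η * η j * η k
          = ∑ j, ∑ k, CbCf S.F j r h k z η * η j * η k) := by
  intro r h z hz η hη
  constructor
  · calc 2 * ∑ i, deBar h (spray S.F i) z η * gM S.F i r z η
        = (∑ j, ∑ k, dz k (CarB S.F j r h) z η * η j * η k)
          - 2 * ∑ l, spray S.F l z η * CarB S.F l r h z η :=
          L22.final_identity S hz hη r h
      _ = (∑ j, ∑ k, dz k (CarB S.F j r h) z η * η j * η k)
          - 2 * ∑ m, spray S.F m z η * (∑ j, de m (CarB S.F j r h) z η * η j)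
          - 2 * ∑ l, spray S.F l z η * CarB S.F l r h z η := by
          rw [show ∑ m, spray S.F m z η * (∑ j, de m (CarB S.F j r h) z η * η j) = 0 from
            Finset.sum_eq_zero fun m _ => by rw [L22.middle_zero S hz hη r h m, mul_zero]]
          ring
      _ = ∑ j, ∑ k, CbB S.F j r h k z η * η j * η k :=
          (L22.CbB_contract S hz hη r h).symm
  · rw [L22.CbB_contract S hz hη r h, L22.CbCf_contract S hz hη r h]
end

section
/- (Proposition 3.2) For a complex Finsler space, the spray coefficients Gⁱ are holomorphic in η, i.e. ∂̇_k̄ Gⁱ = 0 for all k on η ≠ 0, if and only if the Berwald coefficients ᴮLⁱ_{jk} depend only on the position z (are independent of η). -/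
open scoped BigOperators ComplexOrder
open ComplexConjugate

noncomputable section Aux
open Complex Set Filter Bornology Metric
open scoped ContDiff Topology

variable {n : ℕ} {f g : Vec n → ℂ} {s : Set (Vec n)} {x : Vec n} {k : Fin n}

lemma wirt_congr (hs : IsOpen s) (hx : x ∈ s) (h : Set.EqOn f g s) :
    wirt k f x = wirt k g x := by
  have hev : f =ᶠ[nhds x] g := Filter.eventuallyEq_of_mem (hs.mem_nhds hx) h
  rw [wirt, wirt, hev.fderiv_eq]

lemma wirtBar_congr (hs : IsOpen s) (hx : x ∈ s) (h : Set.EqOn f g s) :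
    wirtBar k f x = wirtBar k g x := by
  have hev : f =ᶠ[nhds x] g := Filter.eventuallyEq_of_mem (hs.mem_nhds hx) h
  rw [wirtBar, wirtBar, hev.fderiv_eq]

lemma wirt_zero_of_eqOn_zero (hs : IsOpen s) (hx : x ∈ s) (h : ∀ y ∈ s, f y = 0) :
    wirt k f x = 0 := by
  rw [wirt_congr (g := fun _ => (0:ℂ)) hs hx h, wirt]
  simp [fderiv_const]

lemma vec_decomp (v : Vec n) :
    v = ∑ k, (((v k).re : ℝ) • (Pi.single k (1:ℂ) : Vec n) + ((v k).im : ℝ) • (Pi.single k Complex.I : Vec n)) := by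
  funext j
  simp only [Finset.sum_apply, Pi.add_apply, Pi.smul_apply, Pi.single_apply]
  rw [Finset.sum_eq_single j]
  · simp [Complex.real_smul, Complex.re_add_im]
  · intro b _ hb; simp [if_neg (Ne.symm hb)]
  · intro hj; exact absurd (Finset.mem_univ j) hj

lemma single_I_eq (k : Fin n) :
    (Pi.single k Complex.I : Vec n) = Complex.I • (Pi.single k (1:ℂ) : Vec n) := by
  funext j
  by_cases h : j = k <;> simp [Pi.single_apply, h]

/-- The two basic directional derivatives in terms of wirt/wirtBar. -/
lemma fderiv_single_one (f : Vec n → ℂ) (x : Vec n) (k : Fin n) :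
    fderiv ℝ f x (Pi.single k 1) = wirt k f x + wirtBar k f x := by
  rw [wirt, wirtBar]; ring

lemma fderiv_single_I (f : Vec n → ℂ) (x : Vec n) (k : Fin n) :
    fderiv ℝ f x (Pi.single k Complex.I) = Complex.I * (wirt k f x - wirtBar k f x) := by
  rw [wirt, wirtBar]
  field_simp
  linear_combination (2 * fderiv ℝ f x (Pi.single k Complex.I)) * Complex.I_sq

lemma wirt_const_mul (c : ℂ) (hf : DifferentiableAt ℝ f x) :
    wirt k (fun y => c * f y) x = c * wirt k f x := by
  have h : (fun y => c * f y) = fun y => c • f y := by funext y; simp [smul_eq_mul]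
  rw [wirt, wirt, h, fderiv_fun_const_smul hf c]
  simp [smul_eq_mul]; ring

lemma wirtBar_const_mul (c : ℂ) (hf : DifferentiableAt ℝ f x) :
    wirtBar k (fun y => c * f y) x = c * wirtBar k f x := by
  have h : (fun y => c * f y) = fun y => c • f y := by funext y; simp [smul_eq_mul]
  rw [wirtBar, wirtBar, h, fderiv_fun_const_smul hf c]
  simp [smul_eq_mul]; ring

lemma wirt_sum {ι : Type*} (t : Finset ι) (F : ι → Vec n → ℂ)
    (h : ∀ i ∈ t, DifferentiableAt ℝ (F i) x) :
    wirt k (fun y => ∑ i ∈ t, F i y) x = ∑ i ∈ t, wirt k (F i) x := by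
  rw [wirt]
  rw [fderiv_fun_sum h]
  simp only [ContinuousLinearMap.sum_apply, Finset.mul_sum, ← Finset.sum_sub_distrib, wirt]
lemma wirt_eq_of_cdiff (h : DifferentiableAt ℂ f x) (k : Fin n) :
    wirt k f x = fderiv ℂ f x (Pi.single k 1) := by
  have hres : ∀ v, fderiv ℝ f x v = fderiv ℂ f x v := by
    intro v; rw [(h.hasFDerivAt.restrictScalars ℝ).fderiv]; rfl
  rw [wirt, hres, hres, single_I_eq, map_smul, smul_eq_mul]
  set A := fderiv ℂ f x (Pi.single k 1)
  linear_combination (-A / 2) * Complex.I_sq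

lemma wirtBar_eq_zero_of_cdiff (h : DifferentiableAt ℂ f x) (k : Fin n) :
    wirtBar k f x = 0 := by
  have hres : ∀ v, fderiv ℝ f x v = fderiv ℂ f x v := by
    intro v; rw [(h.hasFDerivAt.restrictScalars ℝ).fderiv]; rfl
  rw [wirtBar, hres, hres, single_I_eq, map_smul, smul_eq_mul]
  set A := fderiv ℂ f x (Pi.single k 1)
  linear_combination (A / 2) * Complex.I_sq

lemma differentiableAt_complex_of_wirtBar
    (hd : DifferentiableAt ℝ f x) (h0 : ∀ k, wirtBar k f x = 0) :
    DifferentiableAt ℂ f x := by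
  set L : Vec n →L[ℂ] ℂ := ∑ k, wirt k f x • ContinuousLinearMap.proj k with hLdef
  have hLs : ∀ (k : Fin n) (c : ℂ), L (Pi.single k c) = wirt k f x * c := by
    intro k c
    simp only [hLdef, ContinuousLinearMap.sum_apply, ContinuousLinearMap.smul_apply,
      ContinuousLinearMap.proj_apply, Pi.single_apply, smul_eq_mul]
    rw [Finset.sum_eq_single k]
    · rw [if_pos rfl]
    · intro b _ hb; rw [if_neg hb, mul_zero]
    · intro hk; exact absurd (Finset.mem_univ k) hk
  have hA : ∀ k, fderiv ℝ f x (Pi.single k 1) = wirt k f x := by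
    intro k; rw [fderiv_single_one, h0 k, add_zero]
  have hB : ∀ k, fderiv ℝ f x (Pi.single k Complex.I) = Complex.I * wirt k f x := by
    intro k; rw [fderiv_single_I, h0 k, sub_zero]
  have heq : (fderiv ℝ f x) = L.restrictScalars ℝ := by
    apply ContinuousLinearMap.ext
    intro v
    have hv := vec_decomp v
    rw [show (fderiv ℝ f x) v = (fderiv ℝ f x) (∑ k, (((v k).re : ℝ) • (Pi.single k (1:ℂ) : Vec n) + ((v k).im : ℝ) • (Pi.single k Complex.I : Vec n))) from by rw [← hv],
      show (L.restrictScalars ℝ) v = (L.restrictScalars ℝ) (∑ k, (((v k).re : ℝ) • (Pi.single k (1:ℂ) : Vec n) + ((v k).im : ℝ) • (Pi.single k Complex.I : Vec n))) from by rw [← hv]]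
    rw [map_sum, map_sum]
    refine Finset.sum_congr rfl fun k _ => ?_
    rw [map_add, map_add, map_smul, map_smul, map_smul, map_smul, hA, hB]
    have h1 : (L.restrictScalars ℝ) (Pi.single k (1:ℂ) : Vec n) = wirt k f x := by
      rw [ContinuousLinearMap.coe_restrictScalars']; rw [hLs]; ring
    have h2 : (L.restrictScalars ℝ) (Pi.single k Complex.I : Vec n) = wirt k f x * Complex.I := by
      rw [ContinuousLinearMap.coe_restrictScalars']; rw [hLs]
    rw [h1, h2]
    simp only [Complex.real_smul]
    ring
  exact ⟨L, hasFDerivAt_of_restrictScalars ℝ hd.hasFDerivAt heq.symm⟩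

def cwirt (g : ℂ → ℂ) (c : ℂ) : ℂ :=
  (1/2) * (fderiv ℝ g c 1 - Complex.I * fderiv ℝ g c Complex.I)

lemma cwirt_congr {g₁ g₂ : ℂ → ℂ} {s : Set ℂ} (hs : IsOpen s) {c : ℂ} (hc : c ∈ s)
    (h : Set.EqOn g₁ g₂ s) : cwirt g₁ c = cwirt g₂ c := by
  have hev : g₁ =ᶠ[nhds c] g₂ := Filter.eventuallyEq_of_mem (hs.mem_nhds hc) h
  rw [cwirt, cwirt, hev.fderiv_eq]

lemma cwirt_of_cdiff {g : ℂ → ℂ} {c : ℂ} (h : DifferentiableAt ℂ g c) :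
    cwirt g c = deriv g c := by
  have hres : ∀ v, fderiv ℝ g c v = fderiv ℂ g c v := by
    intro v; rw [(h.hasFDerivAt.restrictScalars ℝ).fderiv]; rfl
  have hI : fderiv ℂ g c Complex.I = Complex.I * fderiv ℂ g c 1 := by
    rw [show (Complex.I : ℂ) = Complex.I • (1:ℂ) from by simp, map_smul]
    simp [smul_eq_mul]
  rw [cwirt, hres, hres, hI, ← deriv]
  set A := deriv g c
  linear_combination (-A / 2) * Complex.I_sq
lemma conj_eq_re_sub_im (w : ℂ) :
    (starRingEnd ℂ) w = (w.re : ℂ) - (w.im : ℂ) * Complex.I := by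
  apply Complex.ext <;> simp

lemma combo_wirt (w A B : ℂ) :
    (1/2:ℂ) * (((w.re:ℂ) * A + (w.im:ℂ) * B) - Complex.I * (-(w.im:ℂ) * A + (w.re:ℂ) * B))
      = w * ((1/2) * (A - Complex.I * B)) := by
  linear_combination ((1/2:ℂ) * (A - Complex.I * B)) * Complex.re_add_im w
    + ((w.im:ℂ) * B / 2) * Complex.I_sq

lemma combo_wirtBar (w A B : ℂ) :
    (1/2:ℂ) * (((w.re:ℂ) * A + (w.im:ℂ) * B) + Complex.I * (-(w.im:ℂ) * A + (w.re:ℂ) * B))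
      = (starRingEnd ℂ) w * ((1/2) * (A + Complex.I * B)) := by
  rw [conj_eq_re_sub_im]
  linear_combination ((w.im:ℂ) * B / 2) * Complex.I_sq

lemma smul_single_one (c : ℂ) (k : Fin n) :
    c • (Pi.single k (1:ℂ) : Vec n)
      = (c.re : ℝ) • (Pi.single k (1:ℂ) : Vec n) + (c.im : ℝ) • (Pi.single k Complex.I : Vec n) := by
  funext j
  by_cases h : j = k <;>
    simp [Pi.single_apply, h, Complex.real_smul, Complex.re_add_im]

lemma smul_single_I (c : ℂ) (k : Fin n) :
    c • (Pi.single k Complex.I : Vec n)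
      = (-c.im : ℝ) • (Pi.single k (1:ℂ) : Vec n) + (c.re : ℝ) • (Pi.single k Complex.I : Vec n) := by
  funext j
  by_cases h : j = k <;>
    simp [Pi.single_apply, h, Complex.real_smul]
  · apply Complex.ext <;> simp

lemma fderiv_comp_smul' (c : ℂ) (hf : DifferentiableAt ℝ f (c • x)) (v : Vec n) :
    fderiv ℝ (fun y => f (c • y)) x v = fderiv ℝ f (c • x) (c • v) := by
  have hM : HasFDerivAt (fun y : Vec n => c • y)
      ((c • ContinuousLinearMap.id ℂ (Vec n)).restrictScalars ℝ) x :=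
    ((c • ContinuousLinearMap.id ℂ (Vec n)).restrictScalars ℝ).hasFDerivAt
  have hcomp : HasFDerivAt (fun y => f (c • y))
      ((fderiv ℝ f (c • x)).comp ((c • ContinuousLinearMap.id ℂ (Vec n)).restrictScalars ℝ)) x :=
    hf.hasFDerivAt.comp x hM
  rw [hcomp.fderiv]; rfl

lemma wirt_comp_smul (c : ℂ) (hf : DifferentiableAt ℝ f (c • x)) (k : Fin n) :
    wirt k (fun y => f (c • y)) x = c * wirt k f (c • x) := by
  rw [wirt, fderiv_comp_smul' c hf, fderiv_comp_smul' c hf, smul_single_one, smul_single_I,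
    map_add, map_add, map_smul, map_smul, map_smul, map_smul]
  simp only [Complex.real_smul, Complex.ofReal_neg]
  rw [wirt]
  exact combo_wirt c (fderiv ℝ f (c • x) (Pi.single k 1)) (fderiv ℝ f (c • x) (Pi.single k Complex.I))

lemma wirtBar_comp_smul (c : ℂ) (hf : DifferentiableAt ℝ f (c • x)) (k : Fin n) :
    wirtBar k (fun y => f (c • y)) x = (starRingEnd ℂ) c * wirtBar k f (c • x) := by
  rw [wirtBar, fderiv_comp_smul' c hf, fderiv_comp_smul' c hf, smul_single_one, smul_single_I,
    map_add, map_add, map_smul, map_smul, map_smul, map_smul]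
  simp only [Complex.real_smul, Complex.ofReal_neg]
  rw [wirtBar]
  exact combo_wirtBar c (fderiv ℝ f (c • x) (Pi.single k 1)) (fderiv ℝ f (c • x) (Pi.single k Complex.I))

lemma fderiv_comp_line (f : Vec n → ℂ) (η : Vec n) (c : ℂ)
    (hf : DifferentiableAt ℝ f (c • η)) (v : ℂ) :
    fderiv ℝ (fun lam : ℂ => f (lam • η)) c v = fderiv ℝ f (c • η) (v • η) := by
  have hM : HasFDerivAt (fun lam : ℂ => lam • η)
      (((ContinuousLinearMap.id ℂ ℂ).smulRight η).restrictScalars ℝ) c :=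
    (((ContinuousLinearMap.id ℂ ℂ).smulRight η).restrictScalars ℝ).hasFDerivAt
  have hcomp : HasFDerivAt (fun lam : ℂ => f (lam • η))
      ((fderiv ℝ f (c • η)).comp (((ContinuousLinearMap.id ℂ ℂ).smulRight η).restrictScalars ℝ)) c :=
    hf.hasFDerivAt.comp c hM
  rw [hcomp.fderiv]; rfl

lemma cwirt_comp_line (f : Vec n → ℂ) (η : Vec n) (c : ℂ)
    (hf : DifferentiableAt ℝ f (c • η)) :
    cwirt (fun lam : ℂ => f (lam • η)) c = ∑ j, η j * wirt j f (c • η) := by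
  rw [cwirt, fderiv_comp_line f η c hf, fderiv_comp_line f η c hf, one_smul]
  set T := fderiv ℝ f (c • η) with hT
  have h1 : T η = ∑ j, (((η j).re : ℂ) * T (Pi.single j 1) + ((η j).im : ℂ) * T (Pi.single j Complex.I)) := by
    conv_lhs => rw [vec_decomp η]
    rw [map_sum]
    refine Finset.sum_congr rfl fun j _ => ?_
    rw [map_add, map_smul, map_smul]
    simp [Complex.real_smul]
  have h2 : T (Complex.I • η) = ∑ j, (-((η j).im : ℂ) * T (Pi.single j 1) + ((η j).re : ℂ) * T (Pi.single j Complex.I)) := by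
    conv_lhs => rw [vec_decomp (Complex.I • η)]
    rw [map_sum]
    refine Finset.sum_congr rfl fun j _ => ?_
    rw [map_add, map_smul, map_smul]
    have hre : ((Complex.I • η) j).re = -(η j).im := by
      simp [Complex.mul_re]
    have him : ((Complex.I • η) j).im = (η j).re := by
      simp [Complex.mul_im]
    rw [hre, him]
    simp [Complex.real_smul]
  rw [h1, h2, Finset.mul_sum, ← Finset.sum_sub_distrib, Finset.mul_sum]
  refine Finset.sum_congr rfl fun j _ => ?_
  rw [wirt, ← hT]
  exact combo_wirt (η j) (T (Pi.single j 1)) (T (Pi.single j Complex.I))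
/-! ### Smoothness infrastructure -/

def Om (n : ℕ) : Set (Vec n) := {η | η ≠ 0}

lemma isOpen_Om : IsOpen (Om n) := isOpen_ne

lemma one_le_inf : (∞ : WithTop ℕ∞) ≠ 0 := by simp

lemma inf_add_one : (∞ : WithTop ℕ∞) + 1 = ∞ := rfl

/-- Joint smoothness of an `Fn` on `D ×ˢ Om`. -/
def SmOn (D : Set (Vec n)) (f : Fn n) : Prop :=
  ContDiffOn ℝ ∞ (fun p : Vec n × Vec n => f p.1 p.2) (D ×ˢ Om n)

variable {D : Set (Vec n)} {F2 : Fn n}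

lemma SmOn.diffAt (hf : SmOn D F2) (hD : IsOpen D) {z η : Vec n} (hz : z ∈ D) (hη : η ∈ Om n) :
    DifferentiableAt ℝ (fun p : Vec n × Vec n => F2 p.1 p.2) (z, η) :=
  ((hf.differentiableOn one_le_inf).differentiableAt
    (((hD.prod isOpen_Om).mem_nhds ⟨hz, hη⟩)))

lemma SmOn.fixz (hf : SmOn D F2) {z : Vec n} (hz : z ∈ D) :
    ContDiffOn ℝ ∞ (F2 z) (Om n) := by
  have hcomp : ContDiffOn ℝ ∞ ((fun p : Vec n × Vec n => F2 p.1 p.2) ∘ (fun η => (z, η))) (Om n) :=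
    hf.comp ((contDiff_const.prodMk contDiff_id).contDiffOn) (fun η hη => ⟨hz, hη⟩)
  exact hcomp

lemma SmOn.diffSnd (hf : SmOn D F2) {z η : Vec n} (hz : z ∈ D) (hη : η ∈ Om n) :
    DifferentiableAt ℝ (F2 z) η :=
  ((hf.fixz hz).differentiableOn one_le_inf).differentiableAt (isOpen_Om.mem_nhds hη)

lemma SmOn.diffFst (hf : SmOn D F2) (hD : IsOpen D) {z η : Vec n} (hz : z ∈ D) (hη : η ∈ Om n) :
    DifferentiableAt ℝ (fun w => F2 w η) z := by
  have hcomp : DifferentiableAt ℝ ((fun p : Vec n × Vec n => F2 p.1 p.2) ∘ (fun w => (w, η))) z :=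
    (hf.diffAt hD hz hη).comp z (differentiableAt_id.prodMk (differentiableAt_const η))
  exact hcomp

lemma fderiv_snd_eq {z η : Vec n}
    (hf : DifferentiableAt ℝ (fun p : Vec n × Vec n => F2 p.1 p.2) (z, η)) (v : Vec n) :
    fderiv ℝ (F2 z) η v = fderiv ℝ (fun p : Vec n × Vec n => F2 p.1 p.2) (z, η) (0, v) := by
  have hm : HasFDerivAt (fun η' : Vec n => (z, η'))
      ((0 : Vec n →L[ℝ] Vec n).prod (ContinuousLinearMap.id ℝ (Vec n))) η :=
    HasFDerivAt.prodMk (hasFDerivAt_const z η) (hasFDerivAt_id η)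
  have hcomp : HasFDerivAt (F2 z)
      ((fderiv ℝ (fun p : Vec n × Vec n => F2 p.1 p.2) (z, η)).comp
        (((0 : Vec n →L[ℝ] Vec n)).prod (ContinuousLinearMap.id ℝ (Vec n)))) η :=
    hf.hasFDerivAt.comp η hm
  rw [hcomp.fderiv]; rfl

lemma fderiv_fst_eq {z η : Vec n}
    (hf : DifferentiableAt ℝ (fun p : Vec n × Vec n => F2 p.1 p.2) (z, η)) (v : Vec n) :
    fderiv ℝ (fun w => F2 w η) z v
      = fderiv ℝ (fun p : Vec n × Vec n => F2 p.1 p.2) (z, η) (v, 0) := by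
  have hm : HasFDerivAt (fun w : Vec n => (w, η))
      ((ContinuousLinearMap.id ℝ (Vec n)).prod (0 : Vec n →L[ℝ] Vec n)) z :=
    HasFDerivAt.prodMk (hasFDerivAt_id z) (hasFDerivAt_const η z)
  have hcomp : HasFDerivAt (fun w => F2 w η)
      ((fderiv ℝ (fun p : Vec n × Vec n => F2 p.1 p.2) (z, η)).comp
        ((ContinuousLinearMap.id ℝ (Vec n)).prod (0 : Vec n →L[ℝ] Vec n))) z :=
    HasFDerivAt.comp (g := fun p : Vec n × Vec n => F2 p.1 p.2) z hf.hasFDerivAt hm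
  rw [hcomp.fderiv]; rfl

lemma SmOn.de (hf : SmOn D F2) (hD : IsOpen D) (k : Fin n) : SmOn D (de k F2) := by
  have hU : IsOpen (D ×ˢ Om n) := hD.prod isOpen_Om
  have hfd : ContDiffOn ℝ ∞ (fderiv ℝ (fun p : Vec n × Vec n => F2 p.1 p.2)) (D ×ˢ Om n) :=
    hf.fderiv_of_isOpen hU (le_of_eq inf_add_one)
  have h1 : ContDiffOn ℝ ∞ (fun p : Vec n × Vec n => (1/2 : ℂ) *
      ((fderiv ℝ (fun p : Vec n × Vec n => F2 p.1 p.2) p) ((0 : Vec n), (Pi.single k 1 : Vec n)) -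
        Complex.I * (fderiv ℝ (fun p : Vec n × Vec n => F2 p.1 p.2) p) ((0 : Vec n), (Pi.single k Complex.I : Vec n)))) (D ×ˢ Om n) :=
    contDiffOn_const.mul ((hfd.clm_apply contDiffOn_const).sub
      (contDiffOn_const.mul (hfd.clm_apply contDiffOn_const)))
  apply h1.congr
  rintro ⟨z, η⟩ hp
  have hdp := hf.diffAt hD hp.1 hp.2
  show wirt k (F2 z) η = _
  rw [wirt, fderiv_snd_eq hdp, fderiv_snd_eq hdp]

lemma SmOn.deBar (hf : SmOn D F2) (hD : IsOpen D) (k : Fin n) : SmOn D (deBar k F2) := by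
  have hU : IsOpen (D ×ˢ Om n) := hD.prod isOpen_Om
  have hfd : ContDiffOn ℝ ∞ (fderiv ℝ (fun p : Vec n × Vec n => F2 p.1 p.2)) (D ×ˢ Om n) :=
    hf.fderiv_of_isOpen hU (le_of_eq inf_add_one)
  have h1 : ContDiffOn ℝ ∞ (fun p : Vec n × Vec n => (1/2 : ℂ) *
      ((fderiv ℝ (fun p : Vec n × Vec n => F2 p.1 p.2) p) ((0 : Vec n), (Pi.single k 1 : Vec n)) +
        Complex.I * (fderiv ℝ (fun p : Vec n × Vec n => F2 p.1 p.2) p) ((0 : Vec n), (Pi.single k Complex.I : Vec n)))) (D ×ˢ Om n) :=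
    contDiffOn_const.mul ((hfd.clm_apply contDiffOn_const).add
      (contDiffOn_const.mul (hfd.clm_apply contDiffOn_const)))
  apply h1.congr
  rintro ⟨z, η⟩ hp
  have hdp := hf.diffAt hD hp.1 hp.2
  show wirtBar k (F2 z) η = _
  rw [wirtBar, fderiv_snd_eq hdp, fderiv_snd_eq hdp]

lemma SmOn.dz (hf : SmOn D F2) (hD : IsOpen D) (k : Fin n) : SmOn D (dz k F2) := by
  have hU : IsOpen (D ×ˢ Om n) := hD.prod isOpen_Om
  have hfd : ContDiffOn ℝ ∞ (fderiv ℝ (fun p : Vec n × Vec n => F2 p.1 p.2)) (D ×ˢ Om n) :=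
    hf.fderiv_of_isOpen hU (le_of_eq inf_add_one)
  have h1 : ContDiffOn ℝ ∞ (fun p : Vec n × Vec n => (1/2 : ℂ) *
      ((fderiv ℝ (fun p : Vec n × Vec n => F2 p.1 p.2) p) ((Pi.single k 1 : Vec n), (0 : Vec n)) -
        Complex.I * (fderiv ℝ (fun p : Vec n × Vec n => F2 p.1 p.2) p) ((Pi.single k Complex.I : Vec n), (0 : Vec n)))) (D ×ˢ Om n) :=
    contDiffOn_const.mul ((hfd.clm_apply contDiffOn_const).sub
      (contDiffOn_const.mul (hfd.clm_apply contDiffOn_const)))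
  apply h1.congr
  rintro ⟨z, η⟩ hp
  have hdp := hf.diffAt hD hp.1 hp.2
  show wirt k (fun w => F2 w η) z = _
  rw [wirt, fderiv_fst_eq hdp, fderiv_fst_eq hdp]

lemma SmOn.mul {g : Fn n} (hf : SmOn D F2) (hg : SmOn D g) :
    SmOn D (fun z η => F2 z η * g z η) := ContDiffOn.mul hf hg

lemma SmOn.finsum {ι : Type*} (t : Finset ι) (G : ι → Fn n) (h : ∀ i ∈ t, SmOn D (G i)) :
    SmOn D (fun z η => ∑ i ∈ t, G i z η) :=
  ContDiffOn.sum h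

lemma smOn_const (c : ℂ) : SmOn D (fun _ _ => c) := contDiffOn_const

lemma smOn_coord (l : Fin n) : SmOn D (fun _ η => η l) := by
  have : ContDiff ℝ ∞ (fun p : Vec n × Vec n => p.2 l) :=
    ((ContinuousLinearMap.proj l).comp (ContinuousLinearMap.snd ℝ (Vec n) (Vec n))).contDiff
  exact this.contDiffOn

lemma SmOn.finprod (t : Finset (Fin n)) (G : Fin n → Fn n) (h : ∀ i ∈ t, SmOn D (G i)) :
    SmOn D (fun z η => ∏ i ∈ t, G i z η) := by
  classical
  induction t using Finset.induction with
  | empty => simpa using smOn_const (D := D) 1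
  | @insert a t ha ih =>
    have heq : (fun z η => ∏ i ∈ insert a t, G i z η)
        = fun z η => G a z η * ∏ i ∈ t, G i z η := by
      funext z η; rw [Finset.prod_insert ha]
    rw [heq]
    exact (h a (Finset.mem_insert_self a t)).mul
      (ih fun i hi => h i (Finset.mem_insert_of_mem hi))

lemma smOn_det (M : Fin n → Fin n → Fn n) (h : ∀ a b, SmOn D (M a b)) :
    SmOn D (fun z η => Matrix.det (Matrix.of fun a b => M a b z η)) := by
  have h1 : SmOn D (fun z η => ∑ σ : Equiv.Perm (Fin n),
      (((Equiv.Perm.sign σ : ℤ) : ℂ)) * ∏ i, M (σ i) i z η) :=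
    SmOn.finsum _ _ fun σ _ =>
      (smOn_const _).mul (SmOn.finprod _ _ fun i _ => h (σ i) i)
  apply h1.congr
  rintro ⟨z, η⟩ _
  show (Matrix.of fun a b => M a b z η).det = _
  rw [Matrix.det_apply']
  rfl
variable (S : ComplexFinslerSpace n)

lemma smOn_Lsq : SmOn S.D (Lsq S.F) := by
  have h0 : ContDiffOn ℝ ∞ (fun p : Vec n × Vec n => ((S.F p.1 p.2)^2 : ℝ)) (S.D ×ˢ Om n) :=
    S.smoothL.of_le (by simp)
  have h1 := Complex.ofRealCLM.contDiff.comp_contDiffOn h0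
  apply h1.congr
  rintro ⟨z, η⟩ _
  show Lsq S.F z η = _
  rw [Lsq]
  simp only [Function.comp_apply, Complex.ofRealCLM_apply]
  push_cast
  ring

lemma smOn_gM (i j : Fin n) : SmOn S.D (gM S.F i j) :=
  ((smOn_Lsq S).deBar S.isOpen_D j).de S.isOpen_D i

lemma det_gmat_ne_zero {z η : Vec n} (hz : z ∈ S.D) (hη : η ∈ Om n) :
    (gmat S.F z η).det ≠ 0 :=
  (S.posdef z hz η hη).det_pos.ne'

lemma smOn_det_gmat : SmOn S.D (fun z η => (gmat S.F z η).det) := by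
  have := smOn_det (D := S.D) (fun a b => gM S.F a b) (fun a b => smOn_gM S a b)
  exact this

lemma smOn_adjugate (m i : Fin n) : SmOn S.D (fun z η => (gmat S.F z η).adjugate m i) := by
  set M : Fin n → Fin n → Fn n :=
    fun a b z η => if a = i then ((Pi.single m (1:ℂ) : Vec n) b) else gM S.F a b z η with hM
  have h1 : SmOn S.D (fun z η => Matrix.det (Matrix.of fun a b => M a b z η)) := by
    apply smOn_det
    intro a b
    by_cases hai : a = i
    · have : M a b = fun _ _ => ((Pi.single m (1:ℂ) : Vec n) b) := by
        funext z η; simp [hM, hai]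
      rw [this]; exact smOn_const _
    · have : M a b = gM S.F a b := by funext z η; simp [hM, hai]
      rw [this]; exact smOn_gM S a b
  apply h1.congr
  rintro ⟨z, η⟩ _
  show (gmat S.F z η).adjugate m i = _
  rw [Matrix.adjugate_apply]
  congr 1
  ext a b
  rw [Matrix.updateRow_apply]
  simp [hM, Matrix.of_apply, gmat]

lemma smOn_gInv (m i : Fin n) : SmOn S.D (gInv S.F m i) := by
  have hdet := smOn_det_gmat S
  have hdetinv : SmOn S.D (fun z η => ((gmat S.F z η).det)⁻¹) :=
    ContDiffOn.inv hdet (fun p hp => det_gmat_ne_zero S hp.1 hp.2)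
  have h1 : SmOn S.D (fun z η => ((gmat S.F z η).det)⁻¹ * (gmat S.F z η).adjugate m i) :=
    hdetinv.mul (smOn_adjugate S m i)
  apply h1.congr
  rintro ⟨z, η⟩ _
  show gInv S.F m i z η = _
  rw [gInv, Matrix.inv_def, Matrix.smul_apply, Ring.inverse_eq_inv, smul_eq_mul]

lemma smOn_CFN (i j : Fin n) : SmOn S.D (CFN S.F i j) := by
  have h1 : SmOn S.D (fun z η => ∑ m, ∑ l,
      gInv S.F m i z η * dz j (gM S.F l m) z η * η l) :=
    SmOn.finsum _ _ fun m _ => SmOn.finsum _ _ fun l _ =>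
      ((smOn_gInv S m i).mul ((smOn_gM S l m).dz S.isOpen_D j)).mul (smOn_coord l)
  exact h1

lemma smOn_spray (i : Fin n) : SmOn S.D (spray S.F i) := by
  have h1 : SmOn S.D (fun z η => (1/2 : ℂ) * ∑ j, CFN S.F i j z η * η j) :=
    (smOn_const _).mul (SmOn.finsum _ _ fun j _ => (smOn_CFN S i j).mul (smOn_coord j))
  exact h1

lemma smOn_cN (i j : Fin n) : SmOn S.D (cN S.F i j) := (smOn_spray S i).de S.isOpen_D j

lemma smOn_BL (i j k : Fin n) : SmOn S.D (BL S.F i j k) := (smOn_cN S i j).de S.isOpen_D k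

/-- one-variable smoothness of `wirt` on an open set -/
lemma ContDiffOn.wirtOn {f : Vec n → ℂ} {s : Set (Vec n)}
    (hf : ContDiffOn ℝ ∞ f s) (hs : IsOpen s) (k : Fin n) :
    ContDiffOn ℝ ∞ (wirt k f) s := by
  have hfd : ContDiffOn ℝ ∞ (fderiv ℝ f) s := hf.fderiv_of_isOpen hs (le_of_eq inf_add_one)
  have h1 : ContDiffOn ℝ ∞ (fun x => (1/2 : ℂ) *
      ((fderiv ℝ f x) (Pi.single k 1) - Complex.I * (fderiv ℝ f x) (Pi.single k Complex.I))) s :=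
    contDiffOn_const.mul ((hfd.clm_apply contDiffOn_const).sub
      (contDiffOn_const.mul (hfd.clm_apply contDiffOn_const)))
  exact h1.congr fun x _ => rfl
/-! ### Homogeneity -/

def HomOn (D : Set (Vec n)) (p q : ℕ) (f : Fn n) : Prop :=
  ∀ z ∈ D, ∀ η : Vec n, η ≠ 0 → ∀ c : ℂ, c ≠ 0 →
    f z (c • η) = c^p * ((starRingEnd ℂ) c)^q * f z η

lemma HomOn.de' {f : Fn n} {p q : ℕ} (hf : SmOn D f) (hh : HomOn D (p+1) q f)
    (hD : IsOpen D) (k : Fin n) : HomOn D p q (de k f) := by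
  intro z hz η hη c hc
  have hcη : c • η ≠ 0 := smul_ne_zero hc hη
  have h1 : wirt k (fun y => f z (c • y)) η = c * wirt k (f z) (c • η) :=
    wirt_comp_smul c (hf.diffSnd hz hcη) k
  have hEq : Set.EqOn (fun y => f z (c • y))
      (fun y => c^(p+1) * ((starRingEnd ℂ) c)^q * f z y) (Om n) :=
    fun y hy => hh z hz y hy c hc
  have h2 : wirt k (fun y => f z (c • y)) η
      = c^(p+1) * ((starRingEnd ℂ) c)^q * wirt k (f z) η := by
    rw [wirt_congr isOpen_Om hη hEq, wirt_const_mul _ (hf.diffSnd hz hη)]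
  show wirt k (f z) (c • η) = c^p * ((starRingEnd ℂ) c)^q * wirt k (f z) η
  refine mul_left_cancel₀ hc ?_
  rw [← h1, h2]
  ring

lemma HomOn.deBar' {f : Fn n} {p q : ℕ} (hf : SmOn D f) (hh : HomOn D p (q+1) f)
    (hD : IsOpen D) (k : Fin n) : HomOn D p q (deBar k f) := by
  intro z hz η hη c hc
  have hcη : c • η ≠ 0 := smul_ne_zero hc hη
  have hcc : (starRingEnd ℂ) c ≠ 0 := by
    rw [starRingEnd_apply]; exact star_ne_zero.mpr hc
  have h1 : wirtBar k (fun y => f z (c • y)) η = (starRingEnd ℂ) c * wirtBar k (f z) (c • η) :=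
    wirtBar_comp_smul c (hf.diffSnd hz hcη) k
  have hEq : Set.EqOn (fun y => f z (c • y))
      (fun y => c^p * ((starRingEnd ℂ) c)^(q+1) * f z y) (Om n) :=
    fun y hy => hh z hz y hy c hc
  have h2 : wirtBar k (fun y => f z (c • y)) η
      = c^p * ((starRingEnd ℂ) c)^(q+1) * wirtBar k (f z) η := by
    rw [wirtBar_congr isOpen_Om hη hEq, wirtBar_const_mul _ (hf.diffSnd hz hη)]
  show wirtBar k (f z) (c • η) = c^p * ((starRingEnd ℂ) c)^q * wirtBar k (f z) η
  refine mul_left_cancel₀ hcc ?_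
  rw [← h1, h2]
  ring

lemma HomOn.dz' {f : Fn n} {p q : ℕ} (hf : SmOn D f) (hh : HomOn D p q f)
    (hD : IsOpen D) (k : Fin n) : HomOn D p q (dz k f) := by
  intro z hz η hη c hc
  have hEq : Set.EqOn (fun w => f w (c • η))
      (fun w => c^p * ((starRingEnd ℂ) c)^q * f w η) D :=
    fun w hw => hh w hw η hη c hc
  show wirt k (fun w => f w (c • η)) z = c^p * ((starRingEnd ℂ) c)^q * wirt k (fun w => f w η) z
  rw [wirt_congr hD hz hEq, wirt_const_mul _ (hf.diffFst hD hz hη)]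

lemma homOn_Lsq : HomOn S.D 1 1 (Lsq S.F) := by
  intro z hz η hη c hc
  have habs : ((‖c‖ : ℝ) : ℂ)^2 = c * (starRingEnd ℂ) c := by
    rw [Complex.mul_conj, Complex.normSq_eq_norm_sq]
    push_cast
    ring
  show ((S.F z (c • η) : ℝ) : ℂ)^2 = _
  rw [S.homogeneous z hz η c]
  push_cast
  rw [mul_pow, habs]
  show _ = c^1 * ((starRingEnd ℂ) c)^1 * ((S.F z η : ℝ) : ℂ)^2
  ring

lemma homOn_gM (i j : Fin n) : HomOn S.D 0 0 (gM S.F i j) :=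
  HomOn.de' ((smOn_Lsq S).deBar S.isOpen_D j)
    (HomOn.deBar' (smOn_Lsq S) (homOn_Lsq S) S.isOpen_D j) S.isOpen_D i

lemma gmat_smul {z η : Vec n} (hz : z ∈ S.D) (hη : η ≠ 0) {c : ℂ} (hc : c ≠ 0) :
    gmat S.F z (c • η) = gmat S.F z η := by
  apply Matrix.ext
  intro i j
  have := homOn_gM S i j z hz η hη c hc
  simpa [gmat] using this

lemma homOn_gInv (m i : Fin n) : HomOn S.D 0 0 (gInv S.F m i) := by
  intro z hz η hη c hc
  simp only [pow_zero, one_mul]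
  show (gmat S.F z (c • η))⁻¹ m i = (gmat S.F z η)⁻¹ m i
  rw [gmat_smul S hz hη hc]

lemma homOn_dz_gM (l m j : Fin n) : HomOn S.D 0 0 (dz j (gM S.F l m)) :=
  HomOn.dz' (smOn_gM S l m) (homOn_gM S l m) S.isOpen_D j

lemma homOn_CFN (i j : Fin n) : HomOn S.D 1 0 (CFN S.F i j) := by
  intro z hz η hη c hc
  show (∑ m, ∑ l, gInv S.F m i z (c • η) * dz j (gM S.F l m) z (c • η) * (c • η) l) = _
  simp only [pow_one, pow_zero, mul_one]
  show _ = c * ∑ m, ∑ l, gInv S.F m i z η * dz j (gM S.F l m) z η * η l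
  rw [Finset.mul_sum]
  refine Finset.sum_congr rfl fun m _ => ?_
  rw [Finset.mul_sum]
  refine Finset.sum_congr rfl fun l _ => ?_
  have h1 := homOn_gInv S m i z hz η hη c hc
  have h2 := homOn_dz_gM S l m j z hz η hη c hc
  simp only [pow_zero, one_mul] at h1 h2
  rw [h1, h2, Pi.smul_apply, smul_eq_mul]
  ring

lemma homOn_spray (i : Fin n) : HomOn S.D 2 0 (spray S.F i) := by
  intro z hz η hη c hc
  show (1/2 : ℂ) * (∑ j, CFN S.F i j z (c • η) * (c • η) j) = _
  simp only [pow_zero, mul_one]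
  have : ∀ j, CFN S.F i j z (c • η) * (c • η) j = c^2 * (CFN S.F i j z η * η j) := by
    intro j
    have h1 := homOn_CFN S i j z hz η hη c hc
    simp only [pow_one, pow_zero, mul_one] at h1
    rw [h1, Pi.smul_apply, smul_eq_mul]
    ring
  rw [Finset.sum_congr rfl fun j _ => this j, ← Finset.mul_sum]
  show _ = c^2 * ((1/2 : ℂ) * ∑ j, CFN S.F i j z η * η j)
  ring

lemma homOn_cN (i j : Fin n) : HomOn S.D 1 0 (cN S.F i j) :=
  HomOn.de' (smOn_spray S i) (homOn_spray S i) S.isOpen_D j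

lemma homOn_BL (i j k : Fin n) : HomOn S.D 0 0 (BL S.F i j k) :=
  HomOn.de' (smOn_cN S i j) (homOn_cN S i j) S.isOpen_D k
/-! ### Euler-type identity -/

lemma spray_zero (Fm : Vec n → Vec n → ℝ) (i : Fin n) (z : Vec n) :
    spray Fm i z 0 = 0 := by
  show (1/2 : ℂ) * (∑ j, CFN Fm i j z 0 * (0 : Vec n) j) = 0
  simp

lemma BL_eq_wirt_wirt (Fm : Vec n → Vec n → ℝ) (i j k : Fin n) (z η : Vec n) :
    BL Fm i j k z η = wirt k (wirt j (spray Fm i z)) η := rfl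

lemma euler_BL (i : Fin n) {z η : Vec n} (hz : z ∈ S.D) (hη : η ≠ 0) :
    ∑ k, η k * (∑ j, η j * BL S.F i j k z η) = 2 * spray S.F i z η := by
  set h : Vec n → ℂ := spray S.F i z with hh
  have hsm : ContDiffOn ℝ ∞ h (Om n) := (smOn_spray S i).fixz hz
  have hdiff : ∀ ξ : Vec n, ξ ∈ Om n → DifferentiableAt ℝ h ξ := fun ξ hξ =>
    (hsm.differentiableOn one_le_inf).differentiableAt (isOpen_Om.mem_nhds hξ)
  have hom2 : ∀ c : ℂ, h (c • η) = c^2 * h η := by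
    intro c
    by_cases hc : c = 0
    · subst hc
      rw [zero_smul]
      simp [hh, spray_zero]
    · have := homOn_spray S i z hz η hη c hc
      simpa using this
  have E1 : ∀ c : ℂ, c ≠ 0 → ∑ j, η j * wirt j h (c • η) = 2 * c * h η := by
    intro c hc
    have hline := cwirt_comp_line h η c (hdiff _ (smul_ne_zero hc hη))
    have hfun : (fun lam : ℂ => h (lam • η)) = fun lam => lam^2 * h η := funext hom2
    have hcd : DifferentiableAt ℂ (fun lam : ℂ => lam^2 * h η) c :=
      (differentiableAt_pow 2).mul_const _
    have hderiv : deriv (fun lam : ℂ => lam^2 * h η) c = 2 * c * h η := by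
      rw [deriv_mul_const (differentiableAt_pow 2), deriv_pow_field]
      ring
    rw [hfun, cwirt_of_cdiff hcd, hderiv] at hline
    exact hline.symm
  -- second differentiation
  have hwsm : ∀ j, ContDiffOn ℝ ∞ (wirt j h) (Om n) := fun j => hsm.wirtOn isOpen_Om j
  have hwdiff : ∀ (j : Fin n) (ξ : Vec n), ξ ∈ Om n → DifferentiableAt ℝ (wirt j h) ξ :=
    fun j ξ hξ => ((hwsm j).differentiableOn one_le_inf).differentiableAt (isOpen_Om.mem_nhds hξ)
  set f1 : Vec n → ℂ := fun ξ => ∑ j, η j * wirt j h ξ with hf1def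
  have hf1sm : ContDiffOn ℝ ∞ f1 (Om n) :=
    ContDiffOn.sum fun j _ => contDiffOn_const.mul (hwsm j)
  have hηom : η ∈ Om n := hη
  have h1η : (1 : ℂ) • η = η := one_smul _ _
  have hf1diff : DifferentiableAt ℝ f1 ((1:ℂ) • η) := by
    rw [h1η]
    exact (hf1sm.differentiableOn one_le_inf).differentiableAt (isOpen_Om.mem_nhds hηom)
  have hline2 := cwirt_comp_line f1 η 1 hf1diff
  have hEq : Set.EqOn (fun lam : ℂ => f1 (lam • η))
      (fun lam => 2 * lam * (h η)) {lam : ℂ | lam ≠ 0} := fun lam hlam => E1 lam hlam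
  have hcw : cwirt (fun lam : ℂ => f1 (lam • η)) 1 = 2 * h η := by
    rw [cwirt_congr (isOpen_ne) (by exact one_ne_zero : (1:ℂ) ∈ {lam : ℂ | lam ≠ 0}) hEq]
    have hcd : DifferentiableAt ℂ (fun lam : ℂ => 2 * lam * (h η)) 1 := by
      apply DifferentiableAt.mul_const
      exact (differentiableAt_const 2).mul differentiableAt_id
    rw [cwirt_of_cdiff hcd]
    have : (fun lam : ℂ => 2 * lam * (h η)) = fun lam : ℂ => (2 * h η) * lam := by
      funext lam; ring
    rw [this, deriv_const_mul _ differentiableAt_id]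
    simp
  have hwf1 : ∀ k, wirt k f1 η
      = ∑ j, η j * wirt k (wirt j h) η := by
    intro k
    rw [hf1def]
    rw [wirt_sum Finset.univ (fun j => fun ξ => η j * wirt j h ξ)
      (fun j _ => (hwdiff j η hηom).const_mul (η j))]
    refine Finset.sum_congr rfl fun j _ => ?_
    exact wirt_const_mul (η j) (hwdiff j η hηom)
  rw [h1η] at hline2
  rw [hline2] at hcw
  rw [← hcw]
  refine Finset.sum_congr rfl fun k _ => ?_
  rw [hwf1 k]
  rfl
/-! ### Commutation of wirt and wirtBar -/

lemma two_le_inf : (2 : WithTop ℕ∞) ≤ ∞ := by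
  have h : ((2:ℕ∞) : WithTop ℕ∞) ≤ ((⊤:ℕ∞) : WithTop ℕ∞) := WithTop.coe_le_coe.mpr le_top
  simpa using h

lemma fderiv_dir {f : Vec n → ℂ} {x : Vec n}
    (hf2 : DifferentiableAt ℝ (fderiv ℝ f) x) (w v : Vec n) :
    fderiv ℝ (fun y => fderiv ℝ f y w) x v = fderiv ℝ (fderiv ℝ f) x v w := by
  have h : HasFDerivAt (fun y => fderiv ℝ f y w)
      ((ContinuousLinearMap.apply ℝ ℂ w).comp (fderiv ℝ (fderiv ℝ f) x)) x :=
    (ContinuousLinearMap.apply ℝ ℂ w).hasFDerivAt.comp x hf2.hasFDerivAt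
  rw [h.fderiv]; rfl

lemma diff_dir {f : Vec n → ℂ} {x : Vec n}
    (hf2 : DifferentiableAt ℝ (fderiv ℝ f) x) (w : Vec n) :
    DifferentiableAt ℝ (fun y => fderiv ℝ f y w) x := by
  have h : HasFDerivAt (fun y => fderiv ℝ f y w)
      ((ContinuousLinearMap.apply ℝ ℂ w).comp (fderiv ℝ (fderiv ℝ f) x)) x :=
    (ContinuousLinearMap.apply ℝ ℂ w).hasFDerivAt.comp x hf2.hasFDerivAt
  exact h.differentiableAt

lemma wirt_wirtBar_comm {f : Vec n → ℂ} {s : Set (Vec n)} (hs : IsOpen s)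
    (hf : ContDiffOn ℝ ∞ f s) {x : Vec n} (hx : x ∈ s) (k l : Fin n) :
    wirtBar l (wirt k f) x = wirt k (wirtBar l f) x := by
  have hct : ContDiffAt ℝ ∞ f x := (hf x hx).contDiffAt (hs.mem_nhds hx)
  have hsym : IsSymmSndFDerivAt ℝ f x := hct.isSymmSndFDerivAt (by simpa using two_le_inf)
  have hfd : ContDiffOn ℝ ∞ (fderiv ℝ f) s := hf.fderiv_of_isOpen hs (le_of_eq inf_add_one)
  have hf2 : DifferentiableAt ℝ (fderiv ℝ f) x :=
    (hfd.differentiableOn one_le_inf).differentiableAt (hs.mem_nhds hx)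
  set S2 := fderiv ℝ (fderiv ℝ f) x with hS2
  have key : ∀ v w1 w2 (sgn : ℂ), fderiv ℝ (fun y => (1/2 : ℂ) *
      (fderiv ℝ f y w1 + sgn * fderiv ℝ f y w2)) x v
      = (1/2 : ℂ) * (S2 v w1 + sgn * S2 v w2) := by
    intro v w1 w2 sgn
    have hd1 : DifferentiableAt ℝ (fun y => fderiv ℝ f y w1) x := diff_dir hf2 w1
    have hd2 : DifferentiableAt ℝ (fun y => fderiv ℝ f y w2) x := diff_dir hf2 w2
    have hd2' : DifferentiableAt ℝ (fun y => sgn * fderiv ℝ f y w2) x := hd2.const_mul sgn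
    rw [fderiv_const_mul (hd1.fun_add hd2') ((1/2 : ℂ))]
    rw [fderiv_fun_add hd1 hd2']
    rw [fderiv_const_mul hd2 sgn]
    simp only [ContinuousLinearMap.smul_apply, ContinuousLinearMap.add_apply, smul_eq_mul]
    rw [fderiv_dir hf2, fderiv_dir hf2]
  have hwk : wirt k f = fun y => (1/2 : ℂ) *
      (fderiv ℝ f y (Pi.single k 1) + (-Complex.I) * fderiv ℝ f y (Pi.single k Complex.I)) := by
    funext y; rw [wirt]; ring
  have hwbl : wirtBar l f = fun y => (1/2 : ℂ) *
      (fderiv ℝ f y (Pi.single l 1) + Complex.I * fderiv ℝ f y (Pi.single l Complex.I)) := by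
    funext y; rw [wirtBar]
  rw [wirtBar, wirt, hwk, hwbl]
  rw [key, key, key, key]
  have s1 := hsym (Pi.single k 1) (Pi.single l 1)
  have s2 := hsym (Pi.single k 1) (Pi.single l Complex.I)
  have s3 := hsym (Pi.single k Complex.I) (Pi.single l 1)
  have s4 := hsym (Pi.single k Complex.I) (Pi.single l Complex.I)
  rw [← hS2] at s1 s2 s3 s4
  rw [← s1, ← s2, ← s3, ← s4]
  try ring
end Aux

open Complex Set Filter Bornology Metric
open scoped ContDiff Topology

/-- Proposition 3.2: `Gⁱ` holomorphic in `η` iff `ᴮLⁱ_{jk}` depend only on `z`. -/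
theorem statement6 {n : ℕ} (S : ComplexFinslerSpace n) :
    (∀ i k : Fin n, ∀ z ∈ S.D, ∀ η : Vec n, η ≠ 0 → deBar k (spray S.F i) z η = 0) ↔
    (∀ i j k : Fin n, ∀ z ∈ S.D, ∀ η η' : Vec n, η ≠ 0 → η' ≠ 0 →
      BL S.F i j k z η = BL S.F i j k z η') := by
  constructor
  · -- holomorphic sprays ⟹ Berwald coefficients depend only on z
    intro hhol i j k z hz η η' hη hη'
    set h : Vec n → ℂ := spray S.F i z with hh
    have hsm : ContDiffOn ℝ ∞ h (Om n) := (smOn_spray S i).fixz hz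
    have hwj : ContDiffOn ℝ ∞ (wirt j h) (Om n) := hsm.wirtOn isOpen_Om j
    set B : Vec n → ℂ := wirt k (wirt j h) with hBdef
    have hB : ContDiffOn ℝ ∞ B (Om n) := hwj.wirtOn isOpen_Om k
    have hBL : ∀ ξ : Vec n, BL S.F i j k z ξ = B ξ := fun ξ => rfl
    have hbar0 : ∀ (l : Fin n) (ξ : Vec n), ξ ∈ Om n → wirtBar l h ξ = 0 := fun l ξ hξ =>
      hhol i l z hz ξ hξ
    have hBbar : ∀ (l : Fin n) (ξ : Vec n), ξ ∈ Om n → wirtBar l B ξ = 0 := by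
      intro l ξ hξ
      have h1 : wirtBar l B ξ = wirt k (wirtBar l (wirt j h)) ξ :=
        wirt_wirtBar_comm isOpen_Om hwj hξ k l
      have h2 : ∀ y ∈ Om n, wirtBar l (wirt j h) y = 0 := by
        intro y hy
        rw [wirt_wirtBar_comm isOpen_Om hsm hy j l]
        exact wirt_zero_of_eqOn_zero isOpen_Om hy (fun u hu => hbar0 l u hu)
      rw [h1]
      exact wirt_zero_of_eqOn_zero isOpen_Om hξ h2
    have hBc : ∀ ξ ∈ Om n, DifferentiableAt ℂ B ξ := fun ξ hξ =>
      differentiableAt_complex_of_wirtBar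
        ((hB.differentiableOn one_le_inf).differentiableAt (isOpen_Om.mem_nhds hξ))
        (fun l => hBbar l ξ hξ)
    have hBhom : ∀ (ξ : Vec n), ξ ≠ 0 → ∀ c : ℂ, c ≠ 0 → B (c • ξ) = B ξ := by
      intro ξ hξ c hc
      have hb := homOn_BL S i j k z hz ξ hξ c hc
      rw [hBL, hBL] at hb
      simpa using hb
    rw [hBL, hBL]
    by_cases hdep : ∃ c : ℂ, η' = c • η
    · obtain ⟨c, rfl⟩ := hdep
      have hc : c ≠ 0 := by
        rintro rfl
        rw [zero_smul] at hη'
        exact hη' rfl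
      exact (hBhom η hη c hc).symm
    · have hkey1 : ∀ b : ℂ, η + b • η' ≠ 0 := by
        intro b hb0
        rcases eq_or_ne b 0 with rfl | hb
        · rw [zero_smul, add_zero] at hb0; exact hη hb0
        · apply hdep
          have h2 : b • η' = -η := by
            rw [add_comm] at hb0
            exact add_eq_zero_iff_eq_neg.mp hb0
          refine ⟨-b⁻¹, ?_⟩
          have h3 : η' = b⁻¹ • (b • η') := by
            rw [smul_smul, inv_mul_cancel₀ hb, one_smul]
          rw [h3, h2, smul_neg, ← neg_smul]
      have hkey2 : ∀ a : ℂ, a • η + η' ≠ 0 := by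
        intro a ha0
        apply hdep
        have h1 : η' = -(a • η) := eq_neg_of_add_eq_zero_right ha0
        exact ⟨-a, by rw [h1, neg_smul]⟩
      have hBcont : ContinuousOn B (Om n) := hB.continuousOn
      set K : Set (Vec n) := ((fun mu : ℂ => η + mu • η') '' Metric.closedBall 0 1) ∪
        ((fun mu : ℂ => mu • η + η') '' Metric.closedBall 0 1) with hK
      have hKcpt : IsCompact K := IsCompact.union
        ((isCompact_closedBall (0:ℂ) 1).image (by continuity))
        ((isCompact_closedBall (0:ℂ) 1).image (by continuity))
      have hKOm : K ⊆ Om n := by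
        rintro ξ (⟨mu, _, rfl⟩ | ⟨mu, _, rfl⟩)
        · exact hkey1 mu
        · exact hkey2 mu
      have hbdd : IsBounded (B '' K) :=
        (hKcpt.image_of_continuousOn (hBcont.mono hKOm)).isBounded
      have habs_inv : ∀ lam : ℂ, 1 < ‖lam‖ →
          lam⁻¹ ∈ Metric.closedBall (0:ℂ) 1 := by
        intro lam hgt
        rw [Metric.mem_closedBall, dist_zero_right]
        rw [show ‖lam⁻¹‖ = (‖lam‖)⁻¹ from by rw [norm_inv]]
        exact inv_le_one_of_one_le₀ hgt.le
      -- φ : B on the line η + lam • η'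
      have hφd : Differentiable ℂ (fun lam : ℂ => B (η + lam • η')) := by
        intro lam
        have haff : DifferentiableAt ℂ (fun lam : ℂ => η + lam • η') lam :=
          (differentiableAt_const η).add (differentiableAt_id.smul_const η')
        show DifferentiableAt ℂ (B ∘ fun lam : ℂ => η + lam • η') lam
        exact DifferentiableAt.comp lam (hBc _ (hkey1 lam)) haff
      have hφrange : Set.range (fun lam : ℂ => B (η + lam • η')) ⊆ B '' K := by
        rintro - ⟨lam, rfl⟩
        show B (η + lam • η') ∈ B '' K
        rcases le_or_gt (‖lam‖) 1 with hle | hgt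
        · refine ⟨η + lam • η', Or.inl ⟨lam, ?_, rfl⟩, rfl⟩
          rw [Metric.mem_closedBall, dist_zero_right]
          exact hle
        · have hlam : lam ≠ 0 := by
            intro h0; rw [h0, norm_zero] at hgt; exact absurd hgt (by norm_num)
          have heq1 : B (η + lam • η') = B (lam⁻¹ • (η + lam • η')) :=
            (hBhom _ (hkey1 lam) lam⁻¹ (inv_ne_zero hlam)).symm
          have heq2 : lam⁻¹ • (η + lam • η') = lam⁻¹ • η + η' := by
            rw [smul_add, smul_smul, inv_mul_cancel₀ hlam, one_smul]
          rw [heq1, heq2]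
          exact ⟨lam⁻¹ • η + η', Or.inr ⟨lam⁻¹, habs_inv lam hgt, rfl⟩, rfl⟩
      have hφc := hφd.apply_eq_apply_of_bounded (hbdd.subset hφrange) 0 1
      -- ψ : B on the line mu • η + η'
      have hψd : Differentiable ℂ (fun mu : ℂ => B (mu • η + η')) := by
        intro mu
        have haff : DifferentiableAt ℂ (fun mu : ℂ => mu • η + η') mu :=
          (differentiableAt_id.smul_const η).add (differentiableAt_const η')
        show DifferentiableAt ℂ (B ∘ fun mu : ℂ => mu • η + η') mu
        exact DifferentiableAt.comp mu (hBc _ (hkey2 mu)) haff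
      have hψrange : Set.range (fun mu : ℂ => B (mu • η + η')) ⊆ B '' K := by
        rintro - ⟨mu, rfl⟩
        show B (mu • η + η') ∈ B '' K
        rcases le_or_gt (‖mu‖) 1 with hle | hgt
        · refine ⟨mu • η + η', Or.inr ⟨mu, ?_, rfl⟩, rfl⟩
          rw [Metric.mem_closedBall, dist_zero_right]
          exact hle
        · have hmu : mu ≠ 0 := by
            intro h0; rw [h0, norm_zero] at hgt; exact absurd hgt (by norm_num)
          have heq1 : B (mu • η + η') = B (mu⁻¹ • (mu • η + η')) :=
            (hBhom _ (hkey2 mu) mu⁻¹ (inv_ne_zero hmu)).symm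
          have heq2 : mu⁻¹ • (mu • η + η') = η + mu⁻¹ • η' := by
            rw [smul_add, smul_smul, inv_mul_cancel₀ hmu, one_smul]
          rw [heq1, heq2]
          exact ⟨η + mu⁻¹ • η', Or.inl ⟨mu⁻¹, habs_inv mu hgt, rfl⟩, rfl⟩
      have hψc := hψd.apply_eq_apply_of_bounded (hbdd.subset hψrange) 1 0
      simp only [zero_smul, add_zero, one_smul, zero_add] at hφc hψc
      rw [hφc, ← hψc]
  · -- Berwald coefficients depend only on z ⟹ holomorphic sprays
    intro hconst i k z hz η hη
    set h : Vec n → ℂ := spray S.F i z with hh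
    set e : Vec n := Pi.single i 1 with he
    have he0 : e ≠ 0 := by
      intro h0
      have h1 := congrFun h0 i
      rw [he] at h1
      simp at h1
    set q : Vec n → ℂ :=
      fun ξ => (1/2) * ∑ k', ξ k' * (∑ j, ξ j * BL S.F i j k' z e) with hq
    have hEq : Set.EqOn h q (Om n) := by
      intro ξ hξ
      have hE2 := euler_BL S i hz hξ
      have hrepl : ∑ k', ξ k' * (∑ j, ξ j * BL S.F i j k' z ξ)
          = ∑ k', ξ k' * (∑ j, ξ j * BL S.F i j k' z e) := by
        refine Finset.sum_congr rfl fun k' _ => ?_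
        congr 1
        refine Finset.sum_congr rfl fun j' _ => ?_
        rw [hconst i j' k' z hz ξ e hξ he0]
      rw [hrepl] at hE2
      show h ξ = (1/2) * ∑ k', ξ k' * (∑ j, ξ j * BL S.F i j k' z e)
      rw [hE2]
      show h ξ = (1/2) * (2 * h ξ)
      ring
    have hqdiff : DifferentiableAt ℂ q η := by
      apply DifferentiableAt.const_mul
      apply DifferentiableAt.fun_sum
      intro k' _
      apply DifferentiableAt.mul
      · exact (ContinuousLinearMap.proj k' : Vec n →L[ℂ] ℂ).differentiableAt
      · apply DifferentiableAt.fun_sum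
        intro j' _
        exact ((ContinuousLinearMap.proj j' : Vec n →L[ℂ] ℂ).differentiableAt).mul_const _
    show wirtBar k h η = 0
    rw [wirtBar_congr isOpen_Om hη hEq]
    exact wirtBar_eq_zero_of_cdiff hqdiff k
end
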